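/- arXiv:math/9906058 — 5 statements merged into one kernel-verified Lean document; each statement's English description precedes it below -/
import Mathlib

section
/- Let n ≥ 2 be an integer and let r ∈ (−1, 1). Then the Cauchy principal value integral ⨍_{−1}^{1} U_n(s)·(1−s²)^{3/2}/(s−r) ds exists and equals (π/4)·[T_{n−1}(r) − 2·T_{n+1}(r) + T_{n+3}(r)]. -/
/-!
Since `4 (1 - s²) U_n = 2 U_n - U_{n-2} - U_{n+2}`, the integrand is a combination of
`U_k(s) √(1 - s²) / (s - r)` for `k = n, n ± 2`; let `P_k` be the principal value of the latter.
From `U_{k+2} = 2 s U_{k+1} - U_k` and `2 s = 2 (s - r) + 2 r`,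
`P_{k+2} = 2 ∫ U_{k+1} √(1 - s²) ds + 2 r P_{k+1} - P_k`. The integral is `π / 2` for `k = -1`
and vanishes for `k ≥ 0`, because `2 (1 - s²) U_j = T_j - T_{j+2}` and `T_j` integrates to zero
against `ds / √(1 - s²)` for `j ≠ 0`. An explicit primitive gives `P_0 = -π r`, and induction
gives `P_k = -π T_{k+1}(r)`.
-/

open Polynomial Polynomial.Chebyshev Real Set Filter Topology intervalIntegral

namespace ChebyshevPV

noncomputable def truncatedCauchyPV (φ : ℝ → ℝ) (r ε : ℝ) : ℝ :=
  (∫ s in (-1 : ℝ)..(r - ε), φ s / (s - r)) + ∫ s in (r + ε)..(1 : ℝ), φ s / (s - r)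

def HasCauchyPV (φ : ℝ → ℝ) (r L : ℝ) : Prop :=
  Tendsto (truncatedCauchyPV φ r) (𝓝[>] 0) (𝓝 L)

variable {φ ψ : ℝ → ℝ} {r a b : ℝ}

theorem intervalIntegrable_div_sub (hφ : Continuous φ) (hr : r ∉ uIcc a b) :
    IntervalIntegrable (fun s => φ s / (s - r)) MeasureTheory.volume a b :=
  (hφ.continuousOn.div (by fun_prop) fun s hs h =>
    hr (by rwa [← sub_eq_zero.mp h])).intervalIntegrable

theorem intervalIntegrable_div_sub_of_pos (hφ : Continuous φ) (hr : r ∈ Ioo (-1) 1) {ε : ℝ}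
    (hε : 0 < ε) :
    IntervalIntegrable (fun s => φ s / (s - r)) MeasureTheory.volume (-1) (r - ε) ∧
      IntervalIntegrable (fun s => φ s / (s - r)) MeasureTheory.volume (r + ε) 1 := by
  constructor <;> refine intervalIntegrable_div_sub hφ fun h => ?_ <;>
    rcases mem_uIcc.mp h with h | h <;> linarith [hr.1, hr.2, h.1, h.2]

theorem truncatedCauchyPV_add (hφ : Continuous φ) (hψ : Continuous ψ) (hr : r ∈ Ioo (-1) 1)
    {ε : ℝ} (hε : 0 < ε) :
    truncatedCauchyPV (fun s => φ s + ψ s) r ε =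
      truncatedCauchyPV φ r ε + truncatedCauchyPV ψ r ε := by
  obtain ⟨hφ₁, hφ₂⟩ := intervalIntegrable_div_sub_of_pos hφ hr hε
  obtain ⟨hψ₁, hψ₂⟩ := intervalIntegrable_div_sub_of_pos hψ hr hε
  simp only [truncatedCauchyPV, add_div, integral_add hφ₁ hψ₁, integral_add hφ₂ hψ₂]
  ring

theorem truncatedCauchyPV_const_mul (c : ℝ) (ε : ℝ) :
    truncatedCauchyPV (fun s => c * φ s) r ε = c * truncatedCauchyPV φ r ε := by
  simp only [truncatedCauchyPV, mul_div_assoc, integral_const_mul, mul_add]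

theorem HasCauchyPV.add (hφ : Continuous φ) (hψ : Continuous ψ) (hr : r ∈ Ioo (-1) 1)
    (h₁ : HasCauchyPV φ r a) (h₂ : HasCauchyPV ψ r b) :
    HasCauchyPV (fun s => φ s + ψ s) r (a + b) :=
  (Tendsto.add h₁ h₂).congr' <| eventually_nhdsWithin_of_forall fun _ hε =>
    (truncatedCauchyPV_add hφ hψ hr hε).symm

theorem HasCauchyPV.const_mul (c : ℝ) (h : HasCauchyPV φ r a) :
    HasCauchyPV (fun s => c * φ s) r (c * a) :=
  (Tendsto.const_mul c h).congr fun ε => (truncatedCauchyPV_const_mul c ε).symm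

theorem HasCauchyPV.sub (hφ : Continuous φ) (hψ : Continuous ψ) (hr : r ∈ Ioo (-1) 1)
    (h₁ : HasCauchyPV φ r a) (h₂ : HasCauchyPV ψ r b) :
    HasCauchyPV (fun s => φ s - ψ s) r (a - b) := by
  simpa only [neg_one_mul, ← sub_eq_add_neg] using
    h₁.add (ψ := fun s => -1 * ψ s) hφ (continuous_const.mul hψ) hr (h₂.const_mul (-1))

theorem hasCauchyPV_sub_mul (hψ : Continuous ψ) :
    HasCauchyPV (fun s => (s - r) * ψ s) r (∫ s in (-1 : ℝ)..1, ψ s) := by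
  have hint : ∀ a b : ℝ, IntervalIntegrable ψ MeasureTheory.volume a b :=
    hψ.intervalIntegrable
  have hcont : Continuous fun ε : ℝ =>
      (∫ s in (-1 : ℝ)..(r - ε), ψ s) - ∫ s in (1 : ℝ)..(r + ε), ψ s :=
    ((continuous_primitive hint _).comp (by fun_prop)).sub
      ((continuous_primitive hint _).comp (by fun_prop))
  have hlim := (hcont.tendsto 0).mono_left (nhdsWithin_le_nhds (s := Ioi 0))
  rw [sub_zero, add_zero, sub_eq_add_neg, ← integral_symm,
    integral_add_adjacent_intervals (hint _ _) (hint _ _)] at hlim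
  refine hlim.congr fun ε => ?_
  have hae (a b : ℝ) : ∫ s in a..b, (s - r) * ψ s / (s - r) = ∫ s in a..b, ψ s :=
    integral_congr_ae <| (MeasureTheory.volume.ae_ne r).mono fun s hs _ =>
      mul_div_cancel_left₀ _ (sub_ne_zero.mpr hs)
  rw [truncatedCauchyPV, hae, hae, integral_symm (r + ε)]
  ring

/-- `Real.log` is even, so `c * log (x - r)` is `c log |x - r|`: its values at `r ± ε` cancel. -/
theorem hasCauchyPV_of_hasDerivAt {K : ℝ → ℝ} {c : ℝ} (hr : r ∈ Ioo (-1) 1)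
    (hφ : Continuous φ) (hK : ContinuousOn K (Icc (-1) 1))
    (hderiv : ∀ s ∈ Ioo (-1 : ℝ) 1, s ≠ r →
      HasDerivAt (fun x => c * log (x - r) + K x) (φ s / (s - r)) s) :
    HasCauchyPV φ r (K 1 - K (-1) + c * (log (1 - r) - log (1 + r))) := by
  obtain ⟨hr₁, hr₂⟩ := hr
  set H := fun x => c * log (x - r) + K x
  have hH : ContinuousOn H (Icc (-1) 1 \ {r}) :=
    (continuousOn_const.mul <| (continuousOn_id.sub continuousOn_const).log fun x hx =>
      sub_ne_zero.mpr hx.2).add (hK.mono sdiff_subset)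
  have hFTC : ∀ {a b : ℝ}, -1 ≤ a → a ≤ b → b ≤ 1 → r ∉ Icc a b →
      IntervalIntegrable (fun s => φ s / (s - r)) MeasureTheory.volume a b →
      ∫ s in a..b, φ s / (s - r) = H b - H a := fun ha hab hb hra hint =>
    integral_eq_sub_of_hasDeriv_right_of_le hab
      (hH.mono fun x hx => ⟨⟨ha.trans hx.1, hx.2.trans hb⟩, fun h => hra (h ▸ hx)⟩)
      (fun x hx => (hderiv x ⟨ha.trans_lt hx.1, hx.2.trans_le hb⟩
        fun h => hra (h ▸ Ioo_subset_Icc_self hx)).hasDerivWithinAt) hint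
  have hKr : ContinuousAt K r := hK.continuousAt (Icc_mem_nhds hr₁ hr₂)
  have hlim : Tendsto (fun ε => K 1 - K (-1) + c * (log (1 - r) - log (1 + r)) +
      (K (r - ε) - K (r + ε))) (𝓝[>] 0)
      (𝓝 (K 1 - K (-1) + c * (log (1 - r) - log (1 + r)) + (K r - K r))) := by
    refine (tendsto_const_nhds.add ((hKr.tendsto.comp ?_).sub (hKr.tendsto.comp ?_))).mono_left
      nhdsWithin_le_nhds
    · simpa using (continuous_sub_left r).tendsto 0
    · simpa using (continuous_const_add r).tendsto 0
  rw [sub_self, add_zero] at hlim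
  refine hlim.congr' ?_
  filter_upwards [Ioo_mem_nhdsGT (lt_min (sub_pos.mpr hr₂) (neg_lt_iff_pos_add'.mp hr₁))]
    with ε ⟨hε, hεr⟩
  obtain ⟨hint₁, hint₂⟩ := intervalIntegrable_div_sub_of_pos hφ ⟨hr₁, hr₂⟩ hε
  have hε₁ := hεr.trans_le (min_le_left _ _)
  have hε₂ := hεr.trans_le (min_le_right _ _)
  rw [truncatedCauchyPV,
    hFTC le_rfl (by linarith) (by linarith) (fun h => by linarith [h.2]) hint₁,
    hFTC (by linarith) (by linarith) le_rfl (fun h => by linarith [h.1]) hint₂]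
  simp only [H, show r - ε - r = -ε by ring, show r + ε - r = ε by ring,
    show (-1 : ℝ) - r = -(1 + r) by ring, log_neg_eq_log]
  ring

theorem hasDerivAt_sqrt_one_sub_sq {x : ℝ} (hx : x ∈ Ioo (-1) 1) :
    HasDerivAt (fun s => √(1 - s ^ 2)) (-x / √(1 - x ^ 2)) x := by
  have hpos : 0 < 1 - x ^ 2 := by nlinarith [hx.1, hx.2]
  refine (((hasDerivAt_pow 2 x).const_sub 1).sqrt hpos.ne').congr_deriv ?_
  field_simp
  ring

theorem one_sub_mul_add_sqrt_mul_sqrt_pos {x : ℝ} (hr : r ∈ Ioo (-1) 1)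
    (hx : x ∈ Icc (-1) 1) :
    0 < 1 - r * x + √(1 - r ^ 2) * √(1 - x ^ 2) := by
  have hrx : r * x < 1 := (le_abs_self _).trans_lt <| by
    rw [abs_mul]
    exact mul_lt_one_of_nonneg_of_lt_one_left (abs_nonneg r) (abs_lt.2 hr) (abs_le.2 hx)
  positivity

theorem hasDerivAt_log_sub_log_one_sub_mul {s : ℝ} (hr : r ∈ Ioo (-1) 1)
    (hs : s ∈ Ioo (-1) 1) (hsr : s ≠ r) :
    HasDerivAt (fun x => log (x - r) - log (1 - r * x + √(1 - r ^ 2) * √(1 - x ^ 2)))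
      (√(1 - r ^ 2) / ((s - r) * √(1 - s ^ 2))) s := by
  set c := √(1 - r ^ 2)
  set w := √(1 - s ^ 2)
  have hc : c ^ 2 = 1 - r ^ 2 := sq_sqrt (by nlinarith [hr.1, hr.2])
  have hw : w ^ 2 = 1 - s ^ 2 := sq_sqrt (by nlinarith [hs.1, hs.2])
  have hw₀ : w ≠ 0 := (sqrt_pos.mpr (by nlinarith [hs.1, hs.2])).ne'
  have hsr₀ : s - r ≠ 0 := sub_ne_zero.mpr hsr
  have hD : 0 < 1 - r * s + c * w :=
    one_sub_mul_add_sqrt_mul_sqrt_pos hr (Ioo_subset_Icc_self hs)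
  have hlin : HasDerivAt (fun x => 1 - r * x) (-r) s := by
    simpa using ((hasDerivAt_id s).const_mul r).const_sub 1
  have hD' : HasDerivAt (fun x => 1 - r * x + c * √(1 - x ^ 2)) (-r + c * (-s / w)) s :=
    hlin.fun_add ((hasDerivAt_sqrt_one_sub_sq hs).const_mul c)
  have hlog : HasDerivAt (fun x => log (x - r)) (1 / (s - r)) s := by
    simpa using ((hasDerivAt_id s).sub_const r).log hsr₀
  refine (hlog.fun_sub (hD'.log hD.ne')).congr_deriv ?_
  change _ - _ / (1 - r * s + c * w) = _
  generalize hD₀ : 1 - r * s + c * w = D at hD ⊢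
  field_simp
  subst hD₀
  linear_combination c * hw - w * hc

theorem hasCauchyPV_sqrt_one_sub_sq (hr : r ∈ Ioo (-1) 1) :
    HasCauchyPV (fun s => √(1 - s ^ 2)) r (-π * r) := by
  set c := √(1 - r ^ 2)
  have hc : c ^ 2 = 1 - r ^ 2 := sq_sqrt (by nlinarith [hr.1, hr.2])
  have hD : ∀ x ∈ Icc (-1 : ℝ) 1, 0 < 1 - r * x + c * √(1 - x ^ 2) := fun x hx =>
    one_sub_mul_add_sqrt_mul_sqrt_pos hr hx
  have hK : ContinuousOn (fun x => -(c * log (1 - r * x + c * √(1 - x ^ 2))) +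
      (√(1 - x ^ 2) - r * arcsin x)) (Icc (-1) 1) := by
    have := fun x hx => (hD x hx).ne'
    fun_prop (disch := assumption)
  have hderiv : ∀ s ∈ Ioo (-1 : ℝ) 1, s ≠ r →
      HasDerivAt (fun x => c * log (x - r) + (-(c * log (1 - r * x + c * √(1 - x ^ 2))) +
        (√(1 - x ^ 2) - r * arcsin x))) (√(1 - s ^ 2) / (s - r)) s := fun s hs hsr => by
    have hw : √(1 - s ^ 2) ^ 2 = 1 - s ^ 2 := sq_sqrt (by nlinarith [hs.1, hs.2])
    have hw₀ : √(1 - s ^ 2) ≠ 0 := (sqrt_pos.mpr (by nlinarith [hs.1, hs.2])).ne'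
    have hsr₀ : s - r ≠ 0 := sub_ne_zero.mpr hsr
    have h := ((hasDerivAt_log_sub_log_one_sub_mul hr hs hsr).const_mul c).fun_add
      ((hasDerivAt_sqrt_one_sub_sq hs).fun_sub
        ((hasDerivAt_arcsin (by linarith [hs.1]) (by linarith [hs.2])).const_mul r))
    refine (h.congr_deriv ?_).congr_of_eventuallyEq (Eventually.of_forall fun x => by ring)
    field_simp
    linear_combination hc - hw
  convert hasCauchyPV_of_hasDerivAt hr (by fun_prop) hK hderiv using 1
  simp [arcsin_one]
  ring

theorem two_mul_one_sub_X_sq_mul_U {R : Type*} [CommRing R] (k : ℤ) :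
    2 * ((1 - X ^ 2) * U R k) = T R k - T R (k + 2) := by
  linear_combination 2 * one_sub_X_sq_mul_U_eq_pol_in_T R k - T_add_two R k

theorem four_mul_one_sub_X_sq_mul_U {R : Type*} [CommRing R] (k : ℤ) :
    4 * ((1 - X ^ 2) * U R k) = 2 * U R k - U R (k - 2) - U R (k + 2) := by
  linear_combination U_add_two R k + U_sub_two R k + 2 * (X : R[X]) * U_add_one R k

noncomputable def weightedU (k : ℤ) (s : ℝ) : ℝ := (U ℝ k).eval s * √(1 - s ^ 2)

@[fun_prop]
theorem continuous_weightedU (k : ℤ) : Continuous (weightedU k) := by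
  unfold weightedU
  fun_prop

theorem weightedU_zero : weightedU 0 = fun s => √(1 - s ^ 2) :=
  funext fun s => by simp [weightedU]

/-- Writing `√(1 - x²) = (1 - x²) / √(1 - x²)` makes this an integral against `measureT`. -/
theorem integral_weightedU_of_pos {k : ℤ} (hk : 0 < k) :
    ∫ s in (-1 : ℝ)..1, weightedU k s = 0 := by
  have h : ∀ x, weightedU k x =
      ((T ℝ k).eval x - (T ℝ (k + 2)).eval x) / 2 * √(1 - x ^ 2)⁻¹ := fun x => by
    have := congrArg (eval x) (two_mul_one_sub_X_sq_mul_U (R := ℝ) k)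
    simp only [eval_mul, eval_sub, eval_pow, eval_X, eval_one, eval_ofNat] at this
    rw [weightedU, ← this, sqrt_inv]
    conv_lhs => rw [← div_sqrt]
    ring
  rw [integral_congr fun x _ => h x, ← integral_measureT, MeasureTheory.integral_div,
    MeasureTheory.integral_sub (integrable_measureT (by fun_prop))
      (integrable_measureT (by fun_prop)),
    integral_eval_T_real_measureT_of_ne_zero hk.ne',
    integral_eval_T_real_measureT_of_ne_zero (by omega : k + 2 ≠ 0)]
  simp

theorem weightedU_add_two (k : ℤ) (r s : ℝ) :
    weightedU (k + 2) s =
      2 * ((s - r) * weightedU (k + 1) s) + 2 * r * weightedU (k + 1) s - weightedU k s := by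
  simp only [weightedU, U_add_two, eval_sub, eval_mul, eval_X, eval_ofNat]
  ring

theorem HasCauchyPV.weightedU_add_two {k : ℤ} (hr : r ∈ Ioo (-1) 1)
    (h₀ : HasCauchyPV (weightedU k) r a) (h₁ : HasCauchyPV (weightedU (k + 1)) r b) :
    HasCauchyPV (weightedU (k + 2)) r
      (2 * (∫ s in (-1 : ℝ)..1, weightedU (k + 1) s) + 2 * r * b - a) := by
  rw [show weightedU (k + 2) = _ from funext (ChebyshevPV.weightedU_add_two k r)]
  exact (((hasCauchyPV_sub_mul (continuous_weightedU _)).const_mul 2).add (by fun_prop)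
    (by fun_prop) hr (h₁.const_mul (2 * r))).sub (by fun_prop) (by fun_prop) hr h₀

theorem hasCauchyPV_weightedU_neg_one : HasCauchyPV (weightedU (-1)) r 0 := by
  have : truncatedCauchyPV (weightedU (-1)) r = fun _ => 0 := by
    funext ε
    simp [truncatedCauchyPV, weightedU]
  rw [HasCauchyPV, this]
  exact tendsto_const_nhds

theorem hasCauchyPV_weightedU (hr : r ∈ Ioo (-1) 1) :
    ∀ m : ℕ, HasCauchyPV (weightedU m) r (-π * (T ℝ (m + 1)).eval r)
  | 0 => by
    simpa [weightedU_zero, mul_comm] using hasCauchyPV_sqrt_one_sub_sq hr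
  | 1 => by
    convert hasCauchyPV_weightedU_neg_one.weightedU_add_two hr
      (by simpa using hasCauchyPV_weightedU hr 0) using 1
    · norm_num
    · rw [neg_add_cancel, weightedU_zero, integral_sqrt_one_sub_sq]
      norm_num [T_two]
      ring
  | m + 2 => by
    have h := (hasCauchyPV_weightedU hr m).weightedU_add_two hr
      (by simpa using hasCauchyPV_weightedU hr (m + 1))
    rw [integral_weightedU_of_pos (by positivity)] at h
    convert h using 1
    · push_cast; rfl
    · rw [show ((m + 2 : ℕ) : ℤ) + 1 = (m + 1 : ℤ) + 2 by push_cast; ring, T_add_two]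
      simp only [eval_sub, eval_mul, eval_X, eval_ofNat]
      ring

/-- For `x < 0` both sides vanish: there `x ^ (3 / 2)` is `|x| ^ (3 / 2) * cos (3 π / 2)`. -/
theorem rpow_three_halves_eq_mul_sqrt (x : ℝ) : x ^ (3 / 2 : ℝ) = x * √x := by
  rcases le_or_gt 0 x with hx | hx
  · rw [show (3 / 2 : ℝ) = 1 + 1 / 2 by norm_num, rpow_add' hx (by norm_num), rpow_one,
      sqrt_eq_rpow]
  · rw [rpow_def_of_neg hx, sqrt_eq_zero'.mpr hx.le, show 3 / 2 * π = π / 2 + π by ring,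
      cos_add_pi, cos_pi_div_two]
    simp

theorem eval_U_mul_rpow_three_halves (k : ℤ) (s : ℝ) :
    (U ℝ k).eval s * (1 - s ^ 2) ^ (3 / 2 : ℝ) =
      4⁻¹ * (2 * weightedU k s - weightedU (k - 2) s - weightedU (k + 2) s) := by
  have h := congrArg (eval s) (four_mul_one_sub_X_sq_mul_U (R := ℝ) k)
  simp only [eval_mul, eval_sub, eval_pow, eval_X, eval_one, eval_ofNat] at h
  simp only [rpow_three_halves_eq_mul_sqrt, weightedU]
  linear_combination (√(1 - s ^ 2) / 4) * h

end ChebyshevPV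

open ChebyshevPV in
/-- For an integer `n ≥ 2` and `r ∈ (-1, 1)`, the Cauchy principal value
integral `⨍_{-1}^{1} U_n(s) (1-s²)^{3/2}/(s-r) ds` exists and equals
`(π/4) (T_{n-1}(r) - 2 T_{n+1}(r) + T_{n+3}(r))`. -/
theorem cpv_U_m2 (n : ℕ) (hn : 2 ≤ n) (r : ℝ) (hr : r ∈ Set.Ioo (-1 : ℝ) 1) :
    Filter.Tendsto
      (fun ε : ℝ =>
        (∫ s in (-1 : ℝ)..(r - ε),
            (Polynomial.Chebyshev.U ℝ n).eval s * (1 - s ^ 2) ^ ((3 : ℝ) / 2) / (s - r)) +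
        ∫ s in (r + ε)..(1 : ℝ),
            (Polynomial.Chebyshev.U ℝ n).eval s * (1 - s ^ 2) ^ ((3 : ℝ) / 2) / (s - r))
      (nhdsWithin 0 (Set.Ioi 0))
      (nhds (Real.pi / 4 *
        ((Polynomial.Chebyshev.T ℝ ((n : ℤ) - 1)).eval r -
         2 * (Polynomial.Chebyshev.T ℝ ((n : ℤ) + 1)).eval r +
         (Polynomial.Chebyshev.T ℝ ((n : ℤ) + 3)).eval r))) := by
  have hmid := hasCauchyPV_weightedU hr n
  have hlo := hasCauchyPV_weightedU hr (n - 2)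
  have hhi := hasCauchyPV_weightedU hr (n + 2)
  rw [Nat.cast_sub hn, Nat.cast_ofNat, show (n : ℤ) - 2 + 1 = n - 1 by ring] at hlo
  rw [Nat.cast_add, Nat.cast_ofNat, show (n : ℤ) + 2 + 1 = n + 3 by ring] at hhi
  have h := (((hmid.const_mul 2).sub (by fun_prop) (by fun_prop) hr hlo).sub (by fun_prop)
    (by fun_prop) hr hhi).const_mul 4⁻¹
  change HasCauchyPV (fun s => (U ℝ n).eval s * (1 - s ^ 2) ^ (3 / 2 : ℝ)) r _
  convert h using 1
  · exact funext (eval_U_mul_rpow_three_halves n)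
  · ring
end

section
/- Let m ≥ 2 and n ≥ 2m − 2 be integers and let r ∈ (−1, 1). Then the Cauchy principal value integral ⨍_{−1}^{1} U_n(s)·(1−s²)^{m−1/2}/(s−r) ds exists and equals π·(−1)^m·(1/2)^{2m−2} · Σ_{j=0}^{2m−2} (−1)^j · C(2m−2, j) · T_{n+3−2m+2j}(r), where C(2m−2, j) denotes the binomial coefficient. -/
/-!
Since `(1 - s²)^(m - 1/2) = (1 - s²)^(m-1) √(1 - s²)` and `4 (s² - 1) U_k` is the second
forward difference `U_{k+2} - 2 U_k + U_{k-2}` in steps of `2`, the binomial expansion of the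
iterated difference writes the integrand as
`(-1/4)^(m-1) ∑ⱼ (-1)^j C(2m-2, j) U_{n-2m+2+2j}(s) √(1 - s²) / (s - r)`.
Each term is given by `⨍ U_k(s) √(1 - s²) / (s - r) ds = -π T_{k+1}(r)`, proved by a two-step
induction on `k` from `U_{k+2}(s) = 2 (s - r) U_{k+1}(s) + 2 r U_{k+1}(s) - U_k(s)`: the first
summand is regular, and its integral vanishes because `∫ U_j(s) √(1 - s²) ds = 0` for `j ≥ 1`.
The base case `⨍ √(1 - s²) / (s - r) ds = -π r` comes from an explicit primitive, whose only
singular part `√(1 - r²) log |s - r|` is even about `r` and so drops out of the principal value.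
-/

open Real Polynomial Polynomial.Chebyshev MeasureTheory Filter Set Topology

def HasPVIntegral (f : ℝ → ℝ) (a b r I : ℝ) : Prop :=
  Tendsto (fun ε => (∫ s in a..r - ε, f s) + ∫ s in r + ε..b, f s) (𝓝[>] 0) (𝓝 I)

lemma eventually_Icc_subset_Icc_diff_singleton {a b r : ℝ} (hr : r ∈ Ioo a b) :
    ∀ᶠ ε in 𝓝[>] (0 : ℝ), 0 < ε ∧ a ≤ r - ε ∧ r + ε ≤ b ∧
      Icc a (r - ε) ⊆ Icc a b \ {r} ∧ Icc (r + ε) b ⊆ Icc a b \ {r} := by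
  have hδ : (0 : ℝ) < min (r - a) (b - r) := lt_min (by linarith [hr.1]) (by linarith [hr.2])
  filter_upwards [Ioo_mem_nhdsGT hδ] with ε ⟨hε, hεδ⟩
  have := lt_min_iff.mp hεδ
  refine ⟨hε, by linarith, by linarith, ?_, ?_⟩ <;>
    exact fun s hs => ⟨⟨by linarith [hs.1], by linarith [hs.2]⟩, fun h => by
      rw [mem_singleton_iff] at h; linarith [hs.1, hs.2]⟩

namespace HasPVIntegral

variable {f g : ℝ → ℝ} {a b r I J : ℝ}

lemma congr (hr : r ∈ Ioo a b) (h : HasPVIntegral f a b r I) (hfg : EqOn f g (Icc a b \ {r})) :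
    HasPVIntegral g a b r I := by
  refine Tendsto.congr' ?_ h
  filter_upwards [eventually_Icc_subset_Icc_diff_singleton hr] with ε ⟨_, ha, hb, hl, hu⟩
  congr 1 <;> refine intervalIntegral.integral_congr ?_
  exacts [uIcc_of_le ha ▸ hfg.mono hl, uIcc_of_le hb ▸ hfg.mono hu]

lemma const_mul (c : ℝ) (h : HasPVIntegral f a b r I) :
    HasPVIntegral (fun s => c * f s) a b r (c * I) := by
  simpa only [HasPVIntegral, intervalIntegral.integral_const_mul, mul_add] using
    Tendsto.const_mul c h

lemma add (hr : r ∈ Ioo a b) (hf : ContinuousOn f (Icc a b \ {r}))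
    (hg : ContinuousOn g (Icc a b \ {r})) (hI : HasPVIntegral f a b r I)
    (hJ : HasPVIntegral g a b r J) : HasPVIntegral (fun s => f s + g s) a b r (I + J) := by
  refine Tendsto.congr' ?_ (Tendsto.add hI hJ)
  filter_upwards [eventually_Icc_subset_Icc_diff_singleton hr] with ε ⟨_, ha, hb, hl, hu⟩
  rw [intervalIntegral.integral_add ((hf.mono hl).intervalIntegrable_of_Icc ha)
      ((hg.mono hl).intervalIntegrable_of_Icc ha),
    intervalIntegral.integral_add ((hf.mono hu).intervalIntegrable_of_Icc hb)
      ((hg.mono hu).intervalIntegrable_of_Icc hb)]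
  ring

lemma sub (hr : r ∈ Ioo a b) (hf : ContinuousOn f (Icc a b \ {r}))
    (hg : ContinuousOn g (Icc a b \ {r})) (hI : HasPVIntegral f a b r I)
    (hJ : HasPVIntegral g a b r J) : HasPVIntegral (fun s => f s - g s) a b r (I - J) := by
  refine Tendsto.congr' ?_ (Tendsto.sub hI hJ)
  filter_upwards [eventually_Icc_subset_Icc_diff_singleton hr] with ε ⟨_, ha, hb, hl, hu⟩
  rw [intervalIntegral.integral_sub ((hf.mono hl).intervalIntegrable_of_Icc ha)
      ((hg.mono hl).intervalIntegrable_of_Icc ha),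
    intervalIntegral.integral_sub ((hf.mono hu).intervalIntegrable_of_Icc hb)
      ((hg.mono hu).intervalIntegrable_of_Icc hb)]
  ring

lemma finset_sum {ι : Type*} {t : Finset ι} {f : ι → ℝ → ℝ} {I : ι → ℝ} (hr : r ∈ Ioo a b)
    (hf : ∀ i ∈ t, ContinuousOn (f i) (Icc a b \ {r}))
    (h : ∀ i ∈ t, HasPVIntegral (f i) a b r (I i)) :
    HasPVIntegral (fun s => ∑ i ∈ t, f i s) a b r (∑ i ∈ t, I i) := by
  refine Tendsto.congr' ?_ (tendsto_finsetSum t h)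
  filter_upwards [eventually_Icc_subset_Icc_diff_singleton hr] with ε ⟨_, ha, hb, hl, hu⟩
  rw [intervalIntegral.integral_finsetSum fun i hi =>
      ((hf i hi).mono hl).intervalIntegrable_of_Icc ha,
    intervalIntegral.integral_finsetSum fun i hi =>
      ((hf i hi).mono hu).intervalIntegrable_of_Icc hb,
    Finset.sum_add_distrib]

end HasPVIntegral

lemma hasPVIntegral_integral {g : ℝ → ℝ} {a b r : ℝ} (hr : r ∈ Ioo a b)
    (hg : IntervalIntegrable g volume a b) : HasPVIntegral g a b r (∫ s in a..b, g s) := by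
  set G := fun x => ∫ s in a..x, g s
  have hab : a ≤ b := (hr.1.trans hr.2).le
  have hG : ContinuousAt G r :=
    (intervalIntegral.continuousOn_primitive_interval
      ((intervalIntegrable_iff' (μ := volume)).mp hg)).continuousAt
      (uIcc_of_le hab ▸ Icc_mem_nhds hr.1 hr.2)
  have hlim : ∀ c : ℝ, Tendsto (fun ε => G (r + c * ε)) (𝓝[>] 0) (𝓝 (G r)) := fun c =>
    (hG.tendsto.comp ((Continuous.tendsto' (by fun_prop) 0 r (by simp)))).mono_left
      nhdsWithin_le_nhds
  have hGb : G r + (G b - G r) = ∫ s in a..b, g s := add_sub_cancel _ _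
  refine Tendsto.congr' ?_ (hGb ▸ (hlim (-1)).add (tendsto_const_nhds.sub (hlim 1)))
  filter_upwards [eventually_Icc_subset_Icc_diff_singleton hr] with ε ⟨_, ha, hb, _, _⟩
  have hb' : IntervalIntegrable g volume a (r + ε) :=
    hg.mono_set (by rw [uIcc_of_le hab, uIcc_of_le (by linarith)]; exact Icc_subset_Icc_right hb)
  rw [← intervalIntegral.integral_interval_sub_left hg hb']
  simp [G, sub_eq_add_neg]

lemma hasPVIntegral_of_hasDerivAt {f F : ℝ → ℝ} {a b r L : ℝ} (hr : r ∈ Ioo a b)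
    (hF : ContinuousOn F (Icc a b \ {r})) (hF' : ∀ x ∈ Ioo a b \ {r}, HasDerivAt F (f x) x)
    (hf : ContinuousOn f (Icc a b \ {r}))
    (hL : Tendsto (fun ε => F (r - ε) - F (r + ε)) (𝓝[>] 0) (𝓝 L)) :
    HasPVIntegral f a b r (F b - F a + L) := by
  refine Tendsto.congr' ?_ (hL.const_add (F b - F a))
  filter_upwards [eventually_Icc_subset_Icc_diff_singleton hr] with ε ⟨hε, ha, hb, hl, hu⟩
  rw [intervalIntegral.integral_eq_sub_of_hasDerivAt_of_le ha (hF.mono hl)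
      (fun x hx => hF' x ⟨⟨hx.1, by linarith [hx.2, hr.2]⟩, (hl (Ioo_subset_Icc_self hx)).2⟩)
      ((hf.mono hl).intervalIntegrable_of_Icc ha),
    intervalIntegral.integral_eq_sub_of_hasDerivAt_of_le hb (hF.mono hu)
      (fun x hx => hF' x ⟨⟨by linarith [hx.1, hr.1], hx.2⟩, (hu (Ioo_subset_Icc_self hx)).2⟩)
      ((hf.mono hu).intervalIntegrable_of_Icc hb)]
  ring

section Chebyshev

variable {R : Type*} [CommRing R]

lemma four_mul_X_sq_sub_one_mul_U (n : ℤ) :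
    4 * (X ^ 2 - 1) * U R (n + 2) = U R (n + 4) - 2 * U R (n + 2) + U R n := by
  have h₁ := U_add_two R n
  have h₂ := U_add_two R (n + 1)
  have h₃ := U_add_two R (n + 2)
  ring_nf at h₁ h₂ h₃ ⊢
  linear_combination (-1 : R[X]) * h₃ - 2 * X * h₂ - h₁

lemma fwdDiff_iter_two_mul_U (p w : ℕ) :
    (fwdDiff 2)^[2 * p] (fun k : ℕ => U R k) w = (4 * (X ^ 2 - 1)) ^ p * U R ↑(w + 2 * p) := by
  induction p generalizing w with
  | zero => simp
  | succ p ih =>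
    have hΔ : (fwdDiff 2)^[2] (fun k : ℕ => U R k) =
        (4 * (X ^ 2 - 1) : R[X]) • fun k : ℕ => U R ↑(k + 2) := by
      funext k
      simp only [Function.iterate_succ, Function.iterate_zero, Function.comp_apply, id, fwdDiff,
        Pi.smul_apply, smul_eq_mul]
      have h := four_mul_X_sq_sub_one_mul_U (R := R) k
      push_cast
      rw [show (k : ℤ) + 4 = k + 2 + 2 by ring] at h
      linear_combination (-1 : R[X]) * h
    rw [show 2 * (p + 1) = 2 * p + 2 by ring, Function.iterate_add_apply, hΔ,
      fwdDiff_iter_const_smul, Pi.smul_apply, fwdDiff_iter_comp_add 2 (fun k : ℕ => U R k) 2, ih]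
    simp only [smul_eq_mul]
    push_cast
    ring_nf

lemma four_mul_X_sq_sub_one_pow_mul_U (p w : ℕ) :
    (4 * (X ^ 2 - 1)) ^ p * U R ↑(w + 2 * p) =
      ∑ k ∈ Finset.range (2 * p + 1), (-1) ^ k * ((2 * p).choose k : R[X]) * U R ↑(w + 2 * k) := by
  rw [← fwdDiff_iter_two_mul_U, fwdDiff_iter_eq_sum_shift]
  refine Finset.sum_congr rfl fun k hk => ?_
  have hk : k ≤ 2 * p := Nat.lt_succ_iff.mp (Finset.mem_range.mp hk)
  rw [zsmul_eq_mul, smul_eq_mul, mul_comm k 2]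
  push_cast
  rw [neg_one_pow_eq_pow_mod_two, neg_one_pow_eq_pow_mod_two (n := k),
    show (2 * p - k) % 2 = k % 2 by omega]

lemma two_mul_one_sub_X_sq_mul_U (n : ℤ) : 2 * ((1 - X ^ 2) * U R n) = T R n - T R (n + 2) := by
  linear_combination (2 : R[X]) * one_sub_X_sq_mul_U_eq_pol_in_T R n - T_add_two R n

end Chebyshev

lemma integral_U_mul_sqrt_one_sub_sq (i : ℕ) :
    ∫ s in (-1 : ℝ)..1, (U ℝ i).eval s * √(1 - s ^ 2) = if i = 0 then π / 2 else 0 := by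
  have h : ∀ s : ℝ, (U ℝ i).eval s * √(1 - s ^ 2) =
      ((T ℝ i).eval s - (T ℝ (i + 2)).eval s) / 2 * √(1 - s ^ 2)⁻¹ := by
    intro s
    have := congrArg (eval s) (two_mul_one_sub_X_sq_mul_U (R := ℝ) i)
    simp only [eval_mul, eval_sub, eval_ofNat, eval_one, eval_pow, eval_X] at this
    rw [← this, Real.sqrt_inv]
    nth_rw 1 [← Real.div_sqrt (x := 1 - s ^ 2)]
    ring
  rw [intervalIntegral.integral_congr fun s _ => h s, ← integral_measureT, integral_div,
    integral_sub (integrable_measureT (by fun_prop)) (integrable_measureT (by fun_prop)),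
    integral_eval_T_real_measureT_of_ne_zero (n := i + 2) (by omega)]
  split_ifs with hi
  · rw [hi, Nat.cast_zero, integral_eval_T_real_measureT_zero]
    ring
  · rw [integral_eval_T_real_measureT_of_ne_zero (by exact_mod_cast hi)]; simp

lemma U_mul_one_sub_sq_rpow {p w : ℕ} {s : ℝ} (hs : s ∈ Icc (-1) 1) :
    (U ℝ ↑(w + 2 * p)).eval s * (1 - s ^ 2) ^ ((↑(p + 1) : ℝ) - 1 / 2) =
      ∑ j ∈ Finset.range (2 * p + 1), (-4)⁻¹ ^ p * (-1) ^ j * ((2 * p).choose j : ℝ) *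
        ((U ℝ ↑(w + 2 * j)).eval s * √(1 - s ^ 2)) := by
  have h0 : 0 ≤ 1 - s ^ 2 := by nlinarith [hs.1, hs.2]
  have hsplit : (1 - s ^ 2) ^ ((↑(p + 1) : ℝ) - 1 / 2) = (1 - s ^ 2) ^ p * √(1 - s ^ 2) := by
    rw [show (↑(p + 1) : ℝ) - 1 / 2 = p + 1 / 2 by push_cast; ring,
      rpow_add' h0 (by positivity), rpow_natCast, sqrt_eq_rpow]
  have hU := congrArg (eval s) (four_mul_X_sq_sub_one_pow_mul_U (R := ℝ) p w)
  simp only [eval_mul, eval_pow, eval_sub, eval_ofNat, eval_one, eval_X, eval_finsetSum,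
    eval_natCast, eval_neg] at hU
  rw [hsplit, show (1 - s ^ 2) ^ p = (-4)⁻¹ ^ p * (4 * (s ^ 2 - 1)) ^ p by
    rw [← mul_pow]; congr 1; ring]
  calc _ = (-4)⁻¹ ^ p * ((4 * (s ^ 2 - 1)) ^ p * (U ℝ ↑(w + 2 * p)).eval s) * √(1 - s ^ 2) := by
        ring
    _ = _ := by
        rw [hU, Finset.mul_sum, Finset.sum_mul]
        exact Finset.sum_congr rfl fun j _ => by ring

noncomputable def sqrtCauchyPrimitive (r s : ℝ) : ℝ :=
  √(1 - s ^ 2) - r * arcsin s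
    + √(1 - r ^ 2) * (log (s - r) - log (1 - r * s + √(1 - r ^ 2) * √(1 - s ^ 2)))

section sqrtCauchyPrimitive

variable {r : ℝ}

lemma one_sub_mul_add_sqrt_mul_sqrt_pos (hr : r ∈ Ioo (-1) 1) {s : ℝ} (hs : s ∈ Icc (-1) 1) :
    0 < 1 - r * s + √(1 - r ^ 2) * √(1 - s ^ 2) := by
  have : r * s < 1 := by nlinarith [mul_self_nonneg (r - s), hr.1, hr.2, hs.1, hs.2]
  positivity

lemma continuousOn_sqrtCauchyPrimitive (hr : r ∈ Ioo (-1) 1) :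
    ContinuousOn (sqrtCauchyPrimitive r) (Icc (-1) 1 \ {r}) := by
  unfold sqrtCauchyPrimitive
  fun_prop (disch := first
    | exact fun s hs => sub_ne_zero.mpr hs.2
    | exact fun s hs => (one_sub_mul_add_sqrt_mul_sqrt_pos hr hs.1).ne')

lemma hasDerivAt_sqrtCauchyPrimitive (hr : r ∈ Ioo (-1) 1) {s : ℝ} (hs : s ∈ Ioo (-1) 1)
    (hsr : s ≠ r) : HasDerivAt (sqrtCauchyPrimitive r) (√(1 - s ^ 2) / (s - r)) s := by
  set W := √(1 - s ^ 2) with hW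
  set d := √(1 - r ^ 2) with hd
  have hs2 : 0 < 1 - s ^ 2 := by nlinarith [hs.1, hs.2]
  have hr2 : 0 < 1 - r ^ 2 := by nlinarith [hr.1, hr.2]
  have hWpos : 0 < W := Real.sqrt_pos.mpr hs2
  have hW2 : W ^ 2 = 1 - s ^ 2 := Real.sq_sqrt hs2.le
  have hd2 : d ^ 2 = 1 - r ^ 2 := Real.sq_sqrt hr2.le
  have hD : 0 < 1 - r * s + d * W := one_sub_mul_add_sqrt_mul_sqrt_pos hr (Ioo_subset_Icc_self hs)
  have hsr' : s - r ≠ 0 := sub_ne_zero.mpr hsr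
  have hsqrt : HasDerivAt (fun x => √(1 - x ^ 2)) (-s / W) s := by
    convert ((hasDerivAt_pow 2 s).const_sub 1).sqrt hs2.ne' using 1
    field_simp
    rw [← hW]
    push_cast
    ring
  have hlog₁ : HasDerivAt (fun x => log (x - r)) (1 / (s - r)) s := by
    simpa using ((hasDerivAt_id s).sub_const r).log hsr'
  have hlog₂ : HasDerivAt (fun x => log (1 - r * x + d * √(1 - x ^ 2)))
      ((-r + d * (-s / W)) / (1 - r * s + d * W)) s := by
    simpa using ((((hasDerivAt_id s).const_mul r).const_sub 1).add (hsqrt.const_mul d)).log hD.ne'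
  have htot : HasDerivAt (sqrtCauchyPrimitive r) (-s / W - r * (1 / W)
      + d * (1 / (s - r) - (-r + d * (-s / W)) / (1 - r * s + d * W))) s :=
    (hsqrt.sub ((hasDerivAt_arcsin (by linarith [hs.1]) (by linarith [hs.2])).const_mul r)).add
      ((hlog₁.sub hlog₂).const_mul d)
  convert htot using 1
  rw [div_sub_div _ _ hsr' hD.ne']
  field_simp [(show 0 < 1 - s * r + W * d by linarith).ne']
  linear_combination (1 - s*r + W*d - d^2) * hW2 + (-(1 - s*r + W*d) + d*W) * hd2

lemma tendsto_sqrtCauchyPrimitive_sub (hr : r ∈ Ioo (-1) 1) :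
    Tendsto (fun ε => sqrtCauchyPrimitive r (r - ε) - sqrtCauchyPrimitive r (r + ε))
      (𝓝[>] 0) (𝓝 0) := by
  set B : ℝ → ℝ := fun s =>
    √(1 - s ^ 2) - r * arcsin s - √(1 - r ^ 2) * log (1 - r * s + √(1 - r ^ 2) * √(1 - s ^ 2))
  have hB : ContinuousAt B r := by
    refine ContinuousOn.continuousAt (s := Icc (-1) 1) ?_ (Icc_mem_nhds hr.1 hr.2)
    fun_prop (disch := exact fun s hs => (one_sub_mul_add_sqrt_mul_sqrt_pos hr hs).ne')
  have hBε : ∀ c : ℝ, Tendsto (fun ε => B (r + c * ε)) (𝓝[>] 0) (𝓝 (B r)) := fun c =>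
    (hB.tendsto.comp (Continuous.tendsto' (by fun_prop) 0 r (by simp))).mono_left
      nhdsWithin_le_nhds
  -- the logarithmic singularity is even in `s - r`, so it cancels
  have hsymm : ∀ ε, sqrtCauchyPrimitive r (r - ε) - sqrtCauchyPrimitive r (r + ε)
      = B (r + -1 * ε) - B (r + 1 * ε) := fun ε => by
    simp only [sqrtCauchyPrimitive, B, show r - ε - r = -ε by ring, add_sub_cancel_left,
      log_neg_eq_log]
    ring_nf
  simpa only [hsymm, sub_self] using (hBε (-1)).sub (hBε 1)

lemma sqrtCauchyPrimitive_one_sub_neg_one :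
    sqrtCauchyPrimitive r 1 - sqrtCauchyPrimitive r (-1) = -(π * r) := by
  simp only [sqrtCauchyPrimitive, arcsin_one, arcsin_neg, show (-1 : ℝ) - r = -(1 + r) by ring,
    log_neg_eq_log]
  norm_num
  ring

end sqrtCauchyPrimitive

lemma hasPVIntegral_sqrt_one_sub_sq_div {r : ℝ} (hr : r ∈ Ioo (-1) 1) :
    HasPVIntegral (fun s => √(1 - s ^ 2) / (s - r)) (-1) 1 r (-(π * r)) := by
  have h := hasPVIntegral_of_hasDerivAt hr (continuousOn_sqrtCauchyPrimitive hr)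
    (fun s hs => hasDerivAt_sqrtCauchyPrimitive hr hs.1 hs.2)
    (by fun_prop (disch := exact fun s hs => sub_ne_zero.mpr hs.2))
    (tendsto_sqrtCauchyPrimitive_sub hr)
  rwa [add_zero, sqrtCauchyPrimitive_one_sub_neg_one] at h

lemma hasPVIntegral_U_add_two {ω : ℝ → ℝ} {a b r I₀ I₁ : ℝ} (hr : r ∈ Ioo a b)
    (hω : Continuous ω) (k : ℤ)
    (h₀ : HasPVIntegral (fun s => (U ℝ k).eval s * ω s / (s - r)) a b r I₀)
    (h₁ : HasPVIntegral (fun s => (U ℝ (k + 1)).eval s * ω s / (s - r)) a b r I₁) :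
    HasPVIntegral (fun s => (U ℝ (k + 2)).eval s * ω s / (s - r)) a b r
      (2 * (∫ s in a..b, (U ℝ (k + 1)).eval s * ω s) + 2 * r * I₁ - I₀) := by
  have hc : ∀ j : ℤ, ContinuousOn (fun s => (U ℝ j).eval s * ω s / (s - r)) (Icc a b \ {r}) :=
    fun j => by fun_prop (disch := exact fun s hs => sub_ne_zero.mpr hs.2)
  have hint : IntervalIntegrable (fun s => (U ℝ (k + 1)).eval s * ω s) volume a b :=
    (by fun_prop : Continuous _).intervalIntegrable a b
  -- `U_{k+2}(s) = 2 (s - r) U_{k+1}(s) + 2 r U_{k+1}(s) - U_k(s)`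
  refine ((((hasPVIntegral_integral hr hint).const_mul 2).add hr (by fun_prop)
    ((hc _).const_mul _) (h₁.const_mul (2 * r))).sub hr (by fun_prop) (hc k) h₀).congr hr ?_
  intro s hs
  have hsr : s - r ≠ 0 := sub_ne_zero.mpr hs.2
  simp only [U_add_two, eval_sub, eval_mul, eval_ofNat, eval_X]
  field_simp
  ring

theorem hasPVIntegral_U_mul_sqrt_div {r : ℝ} (hr : r ∈ Ioo (-1) 1) (k : ℕ) :
    HasPVIntegral (fun s => (U ℝ k).eval s * √(1 - s ^ 2) / (s - r)) (-1) 1 r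
      (-(π * (T ℝ (k + 1)).eval r)) := by
  let P : ℤ → ℝ → Prop := fun j I =>
    HasPVIntegral (fun s => (U ℝ j).eval s * √(1 - s ^ 2) / (s - r)) (-1) 1 r I
  have step : ∀ (j : ℤ) (I₀ I₁ : ℝ), P j I₀ → P (j + 1) I₁ →
      P (j + 2) (2 * (∫ s in (-1)..1, (U ℝ (j + 1)).eval s * √(1 - s ^ 2)) + 2 * r * I₁ - I₀) :=
    fun j _ _ => hasPVIntegral_U_add_two hr (by fun_prop) j
  have h₀ : P 0 (-(π * r)) := by simpa [P] using hasPVIntegral_sqrt_one_sub_sq_div hr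
  have h₁ : P 1 (-(π * (2 * r ^ 2 - 1))) := by
    have hneg : P (-1) 0 := by simp [P, U_neg_one, HasPVIntegral]
    have hm : ∫ s in (-1)..1, (U ℝ 0).eval s * √(1 - s ^ 2) = π / 2 := by
      simpa using integral_U_mul_sqrt_one_sub_sq 0
    convert step (-1) 0 _ hneg h₀ using 1
    · norm_num
    · rw [neg_add_cancel, hm]
      ring
  suffices ∀ k : ℕ, P k (-(π * (T ℝ (k + 1)).eval r)) ∧ P (k + 1) (-(π * (T ℝ (k + 2)).eval r)) from
    (this k).1
  intro k
  induction k with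
  | zero => simpa [T_two] using ⟨h₀, h₁⟩
  | succ k ih =>
    push_cast
    refine ⟨ih.2, ?_⟩
    convert step k _ _ ih.1 ih.2 using 1
    · ring_nf
    · have hm : ∫ s in (-1)..1, (U ℝ (k + 1)).eval s * √(1 - s ^ 2) = 0 := by
        simpa using integral_U_mul_sqrt_one_sub_sq (k + 1)
      rw [hm, T_add_two, show (k : ℤ) + 1 + 1 = k + 2 by ring]
      simp only [eval_sub, eval_mul, eval_ofNat, eval_X]
      ring

/-- For integers `m ≥ 2`, `n ≥ 2m - 2` and `r ∈ (-1, 1)`, the Cauchy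
principal value integral `⨍_{-1}^{1} U_n(s) (1-s²)^{m-1/2}/(s-r) ds` exists and equals
`π (-1)^m (1/2)^{2m-2} Σ_{j=0}^{2m-2} (-1)^j C(2m-2, j) T_{n+3-2m+2j}(r)`. -/
theorem cpv_U_general (m n : ℕ) (hm : 2 ≤ m) (hn : 2 * m - 2 ≤ n) (r : ℝ)
    (hr : r ∈ Set.Ioo (-1 : ℝ) 1) :
    Filter.Tendsto
      (fun ε : ℝ =>
        (∫ s in (-1 : ℝ)..(r - ε),
            (Polynomial.Chebyshev.U ℝ n).eval s * (1 - s ^ 2) ^ ((m : ℝ) - 1 / 2) / (s - r)) +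
        ∫ s in (r + ε)..(1 : ℝ),
            (Polynomial.Chebyshev.U ℝ n).eval s * (1 - s ^ 2) ^ ((m : ℝ) - 1 / 2) / (s - r))
      (nhdsWithin 0 (Set.Ioi 0))
      (nhds (Real.pi * (-1 : ℝ) ^ m * (1 / 2 : ℝ) ^ (2 * m - 2) *
        ∑ j ∈ Finset.range (2 * m - 1), (-1 : ℝ) ^ j * (Nat.choose (2 * m - 2) j : ℝ) *
          (Polynomial.Chebyshev.T ℝ ((n : ℤ) + 3 - 2 * m + 2 * j)).eval r)) := by
  obtain ⟨p, rfl⟩ : ∃ p, m = p + 1 := ⟨m - 1, by omega⟩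
  obtain ⟨w, rfl⟩ : ∃ w, n = w + 2 * p := ⟨n - 2 * p, by omega⟩
  have hV : ∑ j ∈ Finset.range (2 * p + 1), (-4)⁻¹ ^ p * (-1) ^ j * ((2 * p).choose j : ℝ) *
        -(π * (T ℝ (↑(w + 2 * j) + 1)).eval r) =
      π * (-1) ^ (p + 1) * (1 / 2) ^ (2 * (p + 1) - 2) *
        ∑ j ∈ Finset.range (2 * (p + 1) - 1), (-1) ^ j * ((2 * (p + 1) - 2).choose j : ℝ) *
          (T ℝ (↑(w + 2 * p) + 3 - 2 * ↑(p + 1) + 2 * j)).eval r := by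
    rw [show 2 * (p + 1) - 2 = 2 * p by omega, show 2 * (p + 1) - 1 = 2 * p + 1 by omega,
      Finset.mul_sum]
    refine Finset.sum_congr rfl fun j _ => ?_
    rw [show (↑(w + 2 * p) + 3 - 2 * ↑(p + 1) + 2 * j : ℤ) = ↑(w + 2 * j) + 1 by push_cast; ring,
      show (1 / 2 : ℝ) ^ (2 * p) = (1 / 4) ^ p by rw [pow_mul]; norm_num,
      show (-4 : ℝ)⁻¹ ^ p = (-1) ^ p * (1 / 4) ^ p by rw [← mul_pow]; norm_num]
    ring
  rw [← hV]
  refine (HasPVIntegral.finset_sum hr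
    (fun j _ => by fun_prop (disch := exact fun s hs => sub_ne_zero.mpr hs.2))
    (fun j _ => (hasPVIntegral_U_mul_sqrt_div hr (w + 2 * j)).const_mul _)).congr hr fun s hs => ?_
  rw [U_mul_one_sub_sq_rpow hs.1, Finset.sum_div]
  simp only [mul_div_assoc]
end

section
/- Let n ≥ 2 be an integer and define F : (−1, 1) → ℝ by F(r) = ⨍_{−1}^{1} T_n(s)/( (s−r)·√(1−s²) ) ds (Cauchy principal value). Then F is differentiable at every r ∈ (−1, 1) and F′(r) = (π/(1−r²))·[ ((n+1)/2)·U_{n−2}(r) − ((n−1)/2)·U_n(r) ]. (F′(r) is the Hadamard finite-part integral ⨎_{−1}^{1} T_n(s)/( (s−r)²·√(1−s²) ) ds.) -/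
/-!
Since `T_n(s) = T_n(r) + (s - r) Q(s)` with `Q(s) = 2 ∑_{m<n} U_{n-1-m}(r) T_m(s) - U_{n-1}(r)`,
the integrand splits into `T_n(r) / ((s - r) √(1 - s²))`, with primitive
`(log |t - r| - log (1 - r t + √(1 - r²) √(1 - t²))) / √(1 - r²)`, and `Q(s) / √(1 - s²)`, whose
primitive is continuous on `[-1, 1]` (`T_0 / √(1 - t²)` integrates to `arcsin t` and
`T_m / √(1 - t²)` to `-√(1 - t²) U_{m-1}(t) / m`). The only singularity of the total primitive is
the logarithm at `r`; it is symmetric and cancels in the principal value, so `F(r)` is the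
increase of the primitive over `[-1, 1]`, namely `π U_{n-1}(r)`. Differentiating and using
`(1 - r²) U'_{n-1} = r U_{n-1} - n T_n` gives the formula.
-/

open Polynomial Polynomial.Chebyshev Real Filter Set MeasureTheory intervalIntegral Topology

noncomputable def chebyshevConv (n : ℕ) (r s : ℝ) : ℝ :=
  ∑ m ∈ Finset.range n, (U ℝ (n - 1 - m : ℤ)).eval r * (T ℝ m).eval s

lemma chebyshevConv_add_two (n : ℕ) (r s : ℝ) :
    chebyshevConv (n + 2) r s =
      2 * r * chebyshevConv (n + 1) r s - chebyshevConv n r s + (T ℝ (n + 1 : ℕ)).eval s := by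
  have hU (m : ℕ) : (U ℝ (n + 1 - m : ℤ)).eval r =
      2 * r * (U ℝ (n - m : ℤ)).eval r - (U ℝ (n - 1 - m : ℤ)).eval r := by
    simpa [sub_add_eq_add_sub, sub_right_comm _ (1 : ℤ)] using
      congrArg (eval r) (U_add_one ℝ (n - m : ℤ))
  simp only [chebyshevConv, Nat.cast_add, Nat.cast_ofNat, Nat.cast_one, add_sub_cancel_right,
    show ((n : ℤ) + 2 - 1) = n + 1 by ring, hU, sub_mul, Finset.sum_sub_distrib, mul_assoc,
    ← Finset.mul_sum]
  rw [Finset.sum_range_succ _ (n + 1), Finset.sum_range_succ _ (n + 1),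
    Finset.sum_range_succ (fun m : ℕ => (U ℝ (n - 1 - m : ℤ)).eval r * (T ℝ m).eval s) n]
  push_cast
  simp only [show (n : ℤ) - (n + 1) = -1 by ring, show (n : ℤ) - 1 - (n + 1) = -2 by ring,
    show (n : ℤ) - 1 - n = -1 by ring, U_neg_one, U_neg_two, eval_zero, eval_neg, eval_one]
  ring

lemma eval_T_sub_eval_T (n : ℕ) (r s : ℝ) :
    (T ℝ n).eval s - (T ℝ n).eval r =
      (s - r) * (2 * chebyshevConv n r s - (U ℝ (n - 1 : ℤ)).eval r) := by
  induction n using Nat.twoStepInduction with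
  | zero => simp [chebyshevConv]
  | one => simp [chebyshevConv]; ring
  | more n ih₀ ih₁ =>
    have hTs := congrArg (eval s) (T_add_two ℝ n)
    have hTr := congrArg (eval r) (T_add_two ℝ n)
    have hU := congrArg (eval r) (U_add_one ℝ (n : ℤ))
    simp only [eval_sub, eval_mul, eval_ofNat, eval_X] at hTs hTr hU
    push_cast at ih₀ ih₁ ⊢
    rw [chebyshevConv_add_two, show (n : ℤ) + 2 - 1 = n + 1 by ring]
    rw [show (n : ℤ) + 1 - 1 = n by ring] at ih₁
    push_cast
    linear_combination hTs - hTr + 2 * r * ih₁ - ih₀ + (s - r) * hU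

lemma one_sub_sq_mul_eval_derivative_U (n : ℤ) (r : ℝ) :
    (1 - r ^ 2) * (derivative (U ℝ (n - 1))).eval r =
      ((n : ℝ) + 1) / 2 * (U ℝ (n - 2)).eval r - ((n : ℝ) - 1) / 2 * (U ℝ n).eval r := by
  have h₁ := congrArg (eval r) (add_one_mul_T_eq_poly_in_U (R := ℝ) (n - 1))
  have h₂ := congrArg (eval r) (two_mul_T_eq_U_sub_U ℝ (n - 2))
  have h₃ := congrArg (eval r) (U_sub_two ℝ n)
  simp only [eval_mul, eval_sub, eval_one, eval_pow, eval_X, eval_intCast, eval_ofNat,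
    sub_add_cancel, Int.cast_sub, Int.cast_one] at h₁ h₂ h₃
  linear_combination h₁ - ((n : ℝ) / 2) * h₂ - h₃ / 2

lemma hasDerivAt_sqrt_one_sub_sq {t : ℝ} (ht : t ∈ Ioo (-1 : ℝ) 1) :
    HasDerivAt (fun x => √(1 - x ^ 2)) (-t / √(1 - t ^ 2)) t := by
  have h := ((hasDerivAt_pow 2 t).const_sub 1).sqrt (by nlinarith [ht.1, ht.2])
  convert h using 1
  ring

noncomputable def chebyshevTPrimitive : ℕ → ℝ → ℝ
  | 0, t => arcsin t
  | m + 1, t => -(√(1 - t ^ 2) * (U ℝ m).eval t) / (m + 1)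

lemma hasDerivAt_chebyshevTPrimitive (m : ℕ) {t : ℝ} (ht : t ∈ Ioo (-1 : ℝ) 1) :
    HasDerivAt (chebyshevTPrimitive m) ((T ℝ m).eval t / √(1 - t ^ 2)) t := by
  cases m with
  | zero =>
    show HasDerivAt arcsin _ t
    simpa using hasDerivAt_arcsin ht.1.ne' ht.2.ne
  | succ m =>
    have hq : 0 < 1 - t ^ 2 := by nlinarith [ht.1, ht.2]
    have hsq := sq_sqrt hq.le
    have hT := congrArg (eval t) (add_one_mul_T_eq_poly_in_U (R := ℝ) (m : ℤ))
    simp only [eval_mul, eval_sub, eval_add, eval_one, eval_pow, eval_X, eval_intCast] at hT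
    show HasDerivAt (fun t => -(√(1 - t ^ 2) * (U ℝ m).eval t) / (m + 1)) _ t
    refine (((hasDerivAt_sqrt_one_sub_sq ht).fun_mul ((U ℝ m).hasDerivAt t)).fun_neg.div_const
      _).congr_deriv ?_
    field_simp
    push_cast at hT ⊢
    linear_combination -hT - (derivative (U ℝ m)).eval t * hsq

lemma continuous_chebyshevTPrimitive (m : ℕ) : Continuous (chebyshevTPrimitive m) := by
  cases m with
  | zero => exact continuous_arcsin
  | succ m =>
    show Continuous fun t => -(√(1 - t ^ 2) * (U ℝ m).eval t) / (m + 1)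
    fun_prop

lemma chebyshevTPrimitive_one_sub_neg_one (m : ℕ) :
    chebyshevTPrimitive m 1 - chebyshevTPrimitive m (-1) = if m = 0 then π else 0 := by
  cases m <;> simp [chebyshevTPrimitive]

noncomputable def chebyshevConvPrimitive (n : ℕ) (r t : ℝ) : ℝ :=
  ∑ m ∈ Finset.range n, (U ℝ (n - 1 - m : ℤ)).eval r * chebyshevTPrimitive m t

lemma hasDerivAt_chebyshevConvPrimitive (n : ℕ) (r : ℝ) {t : ℝ} (ht : t ∈ Ioo (-1 : ℝ) 1) :
    HasDerivAt (chebyshevConvPrimitive n r) (chebyshevConv n r t / √(1 - t ^ 2)) t := by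
  unfold chebyshevConvPrimitive chebyshevConv
  rw [Finset.sum_div]
  refine HasDerivAt.fun_sum fun m _ => ?_
  simpa only [mul_div_assoc] using (hasDerivAt_chebyshevTPrimitive m ht).const_mul _

lemma continuous_chebyshevConvPrimitive (n : ℕ) (r : ℝ) :
    Continuous (chebyshevConvPrimitive n r) :=
  continuous_finsetSum _ fun m _ => (continuous_chebyshevTPrimitive m).const_mul _

lemma chebyshevConvPrimitive_one_sub_neg_one (n : ℕ) (r : ℝ) :
    chebyshevConvPrimitive n r 1 - chebyshevConvPrimitive n r (-1) =
      π * (U ℝ (n - 1 : ℤ)).eval r := by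
  simp only [chebyshevConvPrimitive, ← Finset.sum_sub_distrib, ← mul_sub,
    chebyshevTPrimitive_one_sub_neg_one, mul_ite, mul_zero, Finset.sum_ite_eq', Finset.mem_range]
  cases n <;> simp [mul_comm]

noncomputable def cauchyKernelDenom (r t : ℝ) : ℝ := 1 - r * t + √(1 - r ^ 2) * √(1 - t ^ 2)

lemma cauchyKernelDenom_pos {r t : ℝ} (hr : r ∈ Ioo (-1 : ℝ) 1) (ht : t ∈ Icc (-1 : ℝ) 1) :
    0 < cauchyKernelDenom r t := by
  obtain ⟨hr₁, hr₂⟩ := hr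
  obtain ⟨ht₁, ht₂⟩ := ht
  have : 0 < 1 - r * t := by
    nlinarith [mul_nonneg (sub_nonneg.2 ht₂) (neg_le_iff_add_nonneg.1 hr₁.le),
      mul_nonneg (sub_pos.2 hr₂).le (neg_le_iff_add_nonneg.1 ht₁)]
  unfold cauchyKernelDenom
  positivity

lemma hasDerivAt_log_sub_log_cauchyKernelDenom {r t : ℝ} (hr : r ∈ Ioo (-1 : ℝ) 1)
    (ht : t ∈ Ioo (-1 : ℝ) 1) (htr : t ≠ r) :
    HasDerivAt (fun x => log (x - r) - log (cauchyKernelDenom r x))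
      (√(1 - r ^ 2) / ((t - r) * √(1 - t ^ 2))) t := by
  have hD := cauchyKernelDenom_pos hr (Ioo_subset_Icc_self ht)
  have hq : 0 < √(1 - t ^ 2) := sqrt_pos.2 (by nlinarith [ht.1, ht.2])
  have hq2 : √(1 - t ^ 2) ^ 2 = 1 - t ^ 2 := sq_sqrt (by nlinarith [ht.1, ht.2])
  have hw2 : √(1 - r ^ 2) ^ 2 = 1 - r ^ 2 := sq_sqrt (by nlinarith [hr.1, hr.2])
  have htr' : t - r ≠ 0 := sub_ne_zero.2 htr
  have hDderiv : HasDerivAt (cauchyKernelDenom r) (-r + √(1 - r ^ 2) * (-t / √(1 - t ^ 2))) t :=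
    (((hasDerivAt_id' t).const_mul r).const_sub 1 |>.congr_deriv (by simp)).add
      ((hasDerivAt_sqrt_one_sub_sq ht).const_mul _)
  refine (((hasDerivAt_id' t).sub_const r).log htr' |>.sub (hDderiv.log hD.ne')).congr_deriv ?_
  have hDdef : cauchyKernelDenom r t = 1 - r * t + √(1 - r ^ 2) * √(1 - t ^ 2) := rfl
  field_simp
  linear_combination (√(1 - t ^ 2) - √(1 - r ^ 2)) * hDdef - √(1 - t ^ 2) * hw2
    + √(1 - r ^ 2) * hq2

section PrincipalValue

variable {f Ψ : ℝ → ℝ} {r c : ℝ}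

lemma integral_eq_sub_of_hasDerivAt_log_add {u v : ℝ} (huv : u ≤ v) (hr : r ∉ Icc u v)
    (hΨ : ContinuousOn Ψ (Icc u v))
    (hderiv : ∀ x ∈ Ioo u v, HasDerivAt (fun t => c * log (t - r) + Ψ t) (f x) x)
    (hint : IntervalIntegrable f volume u v) :
    ∫ s in u..v, f s = c * log (v - r) + Ψ v - (c * log (u - r) + Ψ u) := by
  refine integral_eq_sub_of_hasDerivAt_of_le huv ?_ hderiv hint
  refine (continuousOn_const.mul (ContinuousOn.log (by fun_prop) fun x hx => ?_)).add hΨ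
  exact sub_ne_zero.2 (ne_of_mem_of_not_mem hx hr)

/- `Real.log` is even, so `log (t - r)` is `log |t - r|`: the singular part `c * log (t - r)` of the
primitive takes the same value at `r - ε` and `r + ε` and drops out of the principal value. -/
theorem tendsto_integral_add_integral_of_hasDerivAt_log_add {a b : ℝ} (hr : r ∈ Ioo a b)
    (hΨ : ContinuousOn Ψ (Icc a b))
    (hderiv : ∀ x ∈ Ioo a b, x ≠ r → HasDerivAt (fun t => c * log (t - r) + Ψ t) (f x) x)
    (hleft : ∀ d ∈ Ioo a r, IntervalIntegrable f volume a d)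
    (hright : ∀ d ∈ Ioo r b, IntervalIntegrable f volume d b) :
    Tendsto (fun ε => (∫ s in a..r - ε, f s) + ∫ s in r + ε..b, f s) (𝓝[>] 0)
      (𝓝 (c * log (b - r) + Ψ b - (c * log (a - r) + Ψ a))) := by
  have hΨr : ContinuousAt Ψ r := hΨ.continuousAt (Icc_mem_nhds hr.1 hr.2)
  have hsym : Tendsto (fun ε => Ψ (r - ε) - Ψ (r + ε)) (𝓝 0) (𝓝 0) := by
    have hminus := hΨr.tendsto.comp ((continuous_sub_left r).tendsto' 0 r (sub_zero r))
    have hplus := hΨr.tendsto.comp ((continuous_const_add r).tendsto' 0 r (add_zero r))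
    simpa using hminus.sub hplus
  rw [← add_zero (_ - _)]
  refine ((tendsto_const_nhds.add hsym).mono_left nhdsWithin_le_nhds).congr' ?_
  filter_upwards [Ioo_mem_nhdsGT (lt_min (sub_pos.2 hr.1) (sub_pos.2 hr.2))] with ε ⟨hε, hεr⟩
  rw [lt_min_iff] at hεr
  rw [integral_eq_sub_of_hasDerivAt_log_add (by linarith) (fun h => by linarith [h.2])
      (hΨ.mono (Icc_subset_Icc_right (by linarith)))
      (fun x hx => hderiv x ⟨hx.1, by linarith [hx.2]⟩ (by linarith [hx.2]))
      (hleft _ ⟨by linarith, by linarith⟩),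
    integral_eq_sub_of_hasDerivAt_log_add (by linarith) (fun h => by linarith [h.1])
      (hΨ.mono (Icc_subset_Icc_left (by linarith)))
      (fun x hx => hderiv x ⟨by linarith [hx.1], hx.2⟩ (by linarith [hx.1]))
      (hright _ ⟨by linarith, by linarith⟩)]
  rw [sub_sub_cancel_left, add_sub_cancel_left, log_neg_eq_log]
  ring

end PrincipalValue

lemma intervalIntegrable_div_sqrt_one_sub_sq {g : ℝ → ℝ} {u v : ℝ} (hu : -1 ≤ u) (huv : u ≤ v)
    (hv : v ≤ 1) (hg : ContinuousOn g (Icc u v)) :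
    IntervalIntegrable (fun s => g s / √(1 - s ^ 2)) volume u v := by
  have h := (intervalIntegrable_sqrt_one_sub_sq_inv.mono_set (by
    rw [uIcc_of_le huv, uIcc_of_le (by norm_num)]; exact Icc_subset_Icc hu hv)).continuousOn_mul
    (g := g) (by rwa [uIcc_of_le huv])
  simpa only [sqrt_inv, ← div_eq_mul_inv] using h

theorem tendsto_principalValue_chebyshevT (n : ℕ) {r : ℝ} (hr : r ∈ Ioo (-1 : ℝ) 1) :
    Tendsto (fun ε => (∫ s in (-1)..(r - ε), (T ℝ n).eval s / ((s - r) * √(1 - s ^ 2))) +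
        ∫ s in (r + ε)..1, (T ℝ n).eval s / ((s - r) * √(1 - s ^ 2)))
      (𝓝[>] 0) (𝓝 (π * (U ℝ (n - 1 : ℤ)).eval r)) := by
  set c := (T ℝ n).eval r / √(1 - r ^ 2)
  set Ψ := fun t => -c * log (cauchyKernelDenom r t) +
    (2 * chebyshevConvPrimitive n r t - (U ℝ (n - 1 : ℤ)).eval r * arcsin t)
  have hΨ : ContinuousOn Ψ (Icc (-1) 1) := by
    refine (continuousOn_const.mul (ContinuousOn.log (by unfold cauchyKernelDenom; fun_prop)
      fun t ht => (cauchyKernelDenom_pos hr ht).ne')).add ?_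
    exact ((continuous_chebyshevConvPrimitive n r).const_mul 2 |>.sub
      (continuous_arcsin.const_mul _)).continuousOn
  have hderiv (x : ℝ) (hx : x ∈ Ioo (-1 : ℝ) 1) (hxr : x ≠ r) :
      HasDerivAt (fun t => c * log (t - r) + Ψ t)
        ((T ℝ n).eval x / ((x - r) * √(1 - x ^ 2))) x := by
    have hw : 0 < √(1 - r ^ 2) := sqrt_pos.2 (by nlinarith [hr.1, hr.2])
    have hq : 0 < √(1 - x ^ 2) := sqrt_pos.2 (by nlinarith [hx.1, hx.2])
    have hkey := eval_T_sub_eval_T n r x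
    have hΦ : (fun t => c * log (t - r) + Ψ t) = fun t =>
        c * (log (t - r) - log (cauchyKernelDenom r t)) +
          (2 * chebyshevConvPrimitive n r t - (U ℝ (n - 1 : ℤ)).eval r * arcsin t) := by
      funext t
      simp only [Ψ]
      ring
    rw [hΦ]
    refine (((hasDerivAt_log_sub_log_cauchyKernelDenom hr hx hxr).const_mul c).fun_add
      (((hasDerivAt_chebyshevConvPrimitive n r hx).const_mul 2).fun_sub
        ((hasDerivAt_arcsin hx.1.ne' hx.2.ne).const_mul _))).congr_deriv ?_
    simp only [c]
    field_simp [sub_ne_zero.2 hxr]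
    linear_combination -hkey
  have hint {u v : ℝ} (hu : -1 ≤ u) (huv : u ≤ v) (hv : v ≤ 1) (hruv : r ∉ Icc u v) :
      IntervalIntegrable (fun s => (T ℝ n).eval s / ((s - r) * √(1 - s ^ 2))) volume u v := by
    simp only [← div_div]
    refine intervalIntegrable_div_sqrt_one_sub_sq hu huv hv (ContinuousOn.div (by fun_prop)
      (by fun_prop) fun s hs => sub_ne_zero.2 (ne_of_mem_of_not_mem hs hruv))
  convert tendsto_integral_add_integral_of_hasDerivAt_log_add hr hΨ hderiv
    (fun d hd => hint le_rfl hd.1.le (by linarith [hd.2, hr.2]) fun h => by linarith [h.2, hd.2])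
    (fun d hd => hint (by linarith [hd.1, hr.1]) hd.2.le le_rfl fun h => by linarith [h.1, hd.1])
    using 2
  have hP := chebyshevConvPrimitive_one_sub_neg_one n r
  simp only [Ψ, cauchyKernelDenom, arcsin_one, arcsin_neg_one,
    show (-1 : ℝ) - r = -(1 + r) by ring, log_neg_eq_log]
  norm_num
  linear_combination -2 * hP

theorem hfp2_T_m0_general (n : ℕ) (F : ℝ → ℝ)
    (hF : ∀ r ∈ Set.Ioo (-1 : ℝ) 1,
      Filter.Tendsto
        (fun ε : ℝ =>
          (∫ s in (-1 : ℝ)..(r - ε),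
              (Polynomial.Chebyshev.T ℝ n).eval s / ((s - r) * Real.sqrt (1 - s ^ 2))) +
          ∫ s in (r + ε)..(1 : ℝ),
              (Polynomial.Chebyshev.T ℝ n).eval s / ((s - r) * Real.sqrt (1 - s ^ 2)))
        (nhdsWithin 0 (Set.Ioi 0)) (nhds (F r))) :
    ∀ r ∈ Set.Ioo (-1 : ℝ) 1,
      HasDerivAt F
        (Real.pi / (1 - r ^ 2) *
          (((n : ℝ) + 1) / 2 * (Polynomial.Chebyshev.U ℝ ((n : ℤ) - 2)).eval r -
           ((n : ℝ) - 1) / 2 * (Polynomial.Chebyshev.U ℝ (n : ℤ)).eval r)) r := by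
  intro r hr
  have hFeq : ∀ x ∈ Set.Ioo (-1 : ℝ) 1, F x = π * (U ℝ (n - 1 : ℤ)).eval x := fun x hx =>
    tendsto_nhds_unique (hF x hx) (tendsto_principalValue_chebyshevT n hx)
  have hval : π * (derivative (U ℝ (n - 1 : ℤ))).eval r = π / (1 - r ^ 2) *
      (((n : ℝ) + 1) / 2 * (U ℝ ((n : ℤ) - 2)).eval r -
        ((n : ℝ) - 1) / 2 * (U ℝ (n : ℤ)).eval r) := by
    have h := one_sub_sq_mul_eval_derivative_U n r
    have hr₂ : (1 : ℝ) - r ^ 2 ≠ 0 := by nlinarith [hr.1, hr.2]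
    push_cast at h
    rw [← h]
    field_simp
  exact ((((U ℝ (n - 1 : ℤ)).hasDerivAt r).const_mul π).congr_deriv hval).congr_of_eventuallyEq
    (eventually_of_mem (Ioo_mem_nhds hr.1 hr.2) hFeq)

/-- Let `n ≥ 2` and let `F` be the Cauchy principal value
`F(r) = ⨍_{-1}^{1} T_n(s)/((s-r)√(1-s²)) ds` on `(-1,1)`. Then `F` is differentiable on
`(-1,1)` with `F'(r) = (π/(1-r²)) (((n+1)/2) U_{n-2}(r) - ((n-1)/2) U_n(r))`, the Hadamard
finite-part integral `⨎_{-1}^{1} T_n(s)/((s-r)² √(1-s²)) ds`. -/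
theorem hfp2_T_m0 (n : ℕ) (hn : 2 ≤ n) (F : ℝ → ℝ)
    (hF : ∀ r ∈ Set.Ioo (-1 : ℝ) 1,
      Filter.Tendsto
        (fun ε : ℝ =>
          (∫ s in (-1 : ℝ)..(r - ε),
              (Polynomial.Chebyshev.T ℝ n).eval s / ((s - r) * Real.sqrt (1 - s ^ 2))) +
          ∫ s in (r + ε)..(1 : ℝ),
              (Polynomial.Chebyshev.T ℝ n).eval s / ((s - r) * Real.sqrt (1 - s ^ 2)))
        (nhdsWithin 0 (Set.Ioi 0)) (nhds (F r))) :
    ∀ r ∈ Set.Ioo (-1 : ℝ) 1,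
      HasDerivAt F
        (Real.pi / (1 - r ^ 2) *
          (((n : ℝ) + 1) / 2 * (Polynomial.Chebyshev.U ℝ ((n : ℤ) - 2)).eval r -
           ((n : ℝ) - 1) / 2 * (Polynomial.Chebyshev.U ℝ (n : ℤ)).eval r)) r :=
  hfp2_T_m0_general n F hF
end

section
/- Let m ≥ 0 and n ≥ 2m be integers and let r ∈ ℝ with |r| > 1. Then the (ordinary Lebesgue) integral ∫_{−1}^{1} T_n(s)·(1−s²)^{m−1/2}/(s−r) ds equals π·(−1)^{m+1}·sgn(r)·(r²−1)^{m−1/2}·( r − sgn(r)·√(r²−1) )^n, where sgn(r) = |r|/r denotes the sign of r. -/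
/-!
Substituting `s = cos θ` and using `T_n(cos θ) = cos (nθ)`,
`sin θ (sin² θ)^(m - 1/2) = sin^(2m) θ` turns the integral into
`trigCauchy r m n = ∫₀^π cos (nθ) sin^(2m) θ / (cos θ - r) dθ`.
Since `∫₀^π cos (kθ) sin^(2m) θ dθ = 0` for `k > 2m`, the identity
`sin² θ = (1 - r²) - (cos θ - r)(cos θ + r)` gives
`trigCauchy r (m+1) n = (1 - r²) trigCauchy r m n` for `n ≥ 2m + 2`, reducing to `m = 0`.
There `cos ((n+2)θ) + cos (nθ) = 2 cos θ cos ((n+1)θ)` gives, for `x n = trigCauchy r 0 n`,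
`x (n+2) = 2r x (n+1) - x n`, and the initial values `x 0 = -sgn(r) π / √(r² - 1)`,
`x 1 = π + r x 0` single out the characteristic root `r - sgn(r) √(r² - 1)`.
For `r > 1`, `x 0` comes from the antiderivative
`-arccos ((r cos θ - 1) / (r - cos θ)) / √(r² - 1)`; for `r < -1` reflect `θ ↦ π - θ`.
-/

open Real MeasureTheory Set

-- No integrability is needed: the change of variables formula holds for every `g`, with both
-- sides the junk value `0` exactly when one of them is not integrable.
lemma integral_neg_one_one_eq_integral_sin_smul_cos {E : Type*} [NormedAddCommGroup E]
    [NormedSpace ℝ E] (g : ℝ → E) :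
    ∫ s in (-1 : ℝ)..1, g s = ∫ θ in 0..π, sin θ • g (cos θ) := by
  have hcos : ∀ θ ∈ Icc 0 π, HasDerivWithinAt cos (-sin θ) (Icc 0 π) θ :=
    fun θ _ => (hasDerivAt_cos θ).hasDerivWithinAt
  have key := integral_image_eq_integral_abs_deriv_smul measurableSet_Icc hcos injOn_cos g
  rw [bijOn_cos.image_eq] at key
  rw [intervalIntegral.integral_of_le (by norm_num), intervalIntegral.integral_of_le pi_pos.le,
    ← integral_Icc_eq_integral_Ioc, ← integral_Icc_eq_integral_Ioc, key]
  refine setIntegral_congr_fun measurableSet_Icc fun θ hθ => ?_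
  rw [abs_neg, abs_of_nonneg (sin_nonneg_of_nonneg_of_le_pi hθ.1 hθ.2)]

lemma mul_sq_rpow_natCast_sub_half {x : ℝ} (hx : 0 < x) (m : ℕ) :
    x * (x ^ 2) ^ ((m : ℝ) - 1 / 2) = x ^ (2 * m) := by
  have hexp : ((2 * m : ℕ) : ℝ) = 1 + (2 : ℕ) * ((m : ℝ) - 1 / 2) := by push_cast; ring
  rw [← rpow_natCast_mul hx.le, ← rpow_natCast, hexp, rpow_add hx, rpow_one]

lemma integral_cos_nat_mul_eq_zero {k : ℕ} (hk : k ≠ 0) :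
    ∫ θ in 0..π, cos (k * θ) = 0 := by
  rw [intervalIntegral.integral_comp_mul_left (fun x => cos x) (Nat.cast_ne_zero.2 hk)]
  simp [integral_cos, sin_nat_mul_pi]

lemma intervalIntegrable_cos_nat_mul_mul_sin_pow (k m : ℕ) :
    IntervalIntegrable (fun θ => cos (k * θ) * sin θ ^ (2 * m)) volume 0 π :=
  (by fun_prop : Continuous _).intervalIntegrable _ _

lemma integral_cos_nat_mul_mul_sin_pow_eq_zero {m k : ℕ} (h : 2 * m < k) :
    ∫ θ in 0..π, cos (k * θ) * sin θ ^ (2 * m) = 0 := by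
  induction m generalizing k with
  | zero => simpa using integral_cos_nat_mul_eq_zero (by omega : k ≠ 0)
  | succ m ih =>
    obtain ⟨l, rfl⟩ : ∃ l, k = l + 2 := ⟨k - 2, by omega⟩
    -- `sin² θ = (1 - cos 2θ) / 2`, then product-to-sum for `cos ((l+2)θ) cos 2θ`
    have hsplit : ∀ θ : ℝ, cos ((l + 2 : ℕ) * θ) * sin θ ^ (2 * (m + 1)) =
        1 / 2 * (cos ((l + 2 : ℕ) * θ) * sin θ ^ (2 * m))
          - 1 / 4 * (cos ((l + 4 : ℕ) * θ) * sin θ ^ (2 * m))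
          - 1 / 4 * (cos (l * θ) * sin θ ^ (2 * m)) := fun θ => by
      have h4 : ((l + 4 : ℕ) : ℝ) * θ = (l + 2 : ℕ) * θ + 2 * θ := by push_cast; ring
      have h0 : (l : ℝ) * θ = (l + 2 : ℕ) * θ - 2 * θ := by push_cast; ring
      rw [h4, h0, cos_add, cos_sub, cos_two_mul, sin_two_mul]
      linear_combination cos (((l + 2 : ℕ) : ℝ) * θ) * sin θ ^ (2 * m) * sin_sq θ
    have hint := intervalIntegrable_cos_nat_mul_mul_sin_pow
    rw [intervalIntegral.integral_congr fun θ _ => hsplit θ,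
      intervalIntegral.integral_sub (((hint _ m).const_mul _).sub ((hint _ m).const_mul _))
        ((hint _ m).const_mul _),
      intervalIntegral.integral_sub ((hint _ m).const_mul _) ((hint _ m).const_mul _)]
    simp only [intervalIntegral.integral_const_mul, ih (by omega : 2 * m < l + 2),
      ih (by omega : 2 * m < l + 4), ih (by omega : 2 * m < l)]
    norm_num

lemma eq_mul_pow_of_two_step {R : Type*} [CommRing R] {x : ℕ → R} {a b c ρ : R}
    (hρ : ρ ^ 2 = a * ρ + b) (hx : ∀ n, x (n + 2) = a * x (n + 1) + b * x n)
    (h0 : x 0 = c) (h1 : x 1 = c * ρ) (n : ℕ) : x n = c * ρ ^ n := by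
  induction n using Nat.twoStepInduction with
  | zero => simpa using h0
  | one => simpa using h1
  | more n ih₀ ih₁ =>
    rw [hx, ih₀, ih₁]
    linear_combination -c * ρ ^ n * hρ

noncomputable def trigCauchy (r : ℝ) (m n : ℕ) : ℝ :=
  ∫ θ in 0..π, cos (n * θ) * sin θ ^ (2 * m) / (cos θ - r)

lemma integral_chebyshevT_mul_rpow_div_sub_eq_trigCauchy (r : ℝ) (m n : ℕ) :
    ∫ s in (-1 : ℝ)..1,
        (Polynomial.Chebyshev.T ℝ n).eval s * (1 - s ^ 2) ^ ((m : ℝ) - 1 / 2) / (s - r) =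
      trigCauchy r m n := by
  rw [integral_neg_one_one_eq_integral_sin_smul_cos, trigCauchy,
    intervalIntegral.integral_of_le pi_pos.le, intervalIntegral.integral_of_le pi_pos.le,
    integral_Ioc_eq_integral_Ioo, integral_Ioc_eq_integral_Ioo]
  refine setIntegral_congr_fun measurableSet_Ioo fun θ hθ => ?_
  have hT := Polynomial.Chebyshev.T_real_cos θ n
  rw [Int.cast_natCast] at hT
  rw [smul_eq_mul, hT, ← sin_sq,
    ← mul_sq_rpow_natCast_sub_half (sin_pos_of_pos_of_lt_pi hθ.1 hθ.2)]
  ring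

section trigCauchy

variable {r : ℝ}

lemma hasDerivAt_arccos_div_sub_cos {θ : ℝ} (hr : 1 < r) (hθ : θ ∈ Ioo 0 π) :
    HasDerivAt (fun θ => arccos ((r * cos θ - 1) / (r - cos θ)))
      (√(r ^ 2 - 1) / (r - cos θ)) θ := by
  have hD : 0 < r ^ 2 - 1 := by nlinarith
  have hden : 0 < r - cos θ := by linarith [cos_le_one θ]
  have hsin : 0 < sin θ := sin_pos_of_pos_of_lt_pi hθ.1 hθ.2
  set u := (r * cos θ - 1) / (r - cos θ)
  have hsqrt : √(1 - u ^ 2) = √(r ^ 2 - 1) * sin θ / (r - cos θ) := by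
    have h1u : 1 - u ^ 2 = (√(r ^ 2 - 1) * sin θ / (r - cos θ)) ^ 2 := by
      rw [div_pow (√(r ^ 2 - 1) * sin θ), mul_pow, sq_sqrt hD.le]
      simp only [u]
      field_simp
      linear_combination -(r ^ 2 - 1) * sin_sq θ
    rw [h1u, sqrt_sq (by positivity)]
  have hu : -1 < u ∧ u < 1 := by
    have : 0 < 1 - u ^ 2 := by rw [← sqrt_pos, hsqrt]; positivity
    constructor <;> nlinarith
  have hu' : HasDerivAt (fun θ => (r * cos θ - 1) / (r - cos θ))
      (sin θ * (1 - r ^ 2) / (r - cos θ) ^ 2) θ :=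
    ((((hasDerivAt_cos θ).const_mul r).sub_const 1).div ((hasDerivAt_cos θ).const_sub r)
      hden.ne').congr_deriv (by ring)
  refine ((hasDerivAt_arccos hu.1.ne' hu.2.ne).comp θ hu').congr_deriv ?_
  rw [hsqrt]
  field_simp
  linear_combination -sq_sqrt hD.le

lemma integral_inv_cos_sub_of_one_lt (hr : 1 < r) :
    ∫ θ in 0..π, (cos θ - r)⁻¹ = -π / √(r ^ 2 - 1) := by
  have hden : ∀ θ, cos θ < r := fun θ => by linarith [cos_le_one θ]
  have hu : Continuous fun θ => (r * cos θ - 1) / (r - cos θ) :=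
    Continuous.div (by fun_prop) (by fun_prop) fun θ => (sub_pos.2 (hden θ)).ne'
  have h0 : (r * cos 0 - 1) / (r - cos 0) = 1 := by
    rw [cos_zero, mul_one, div_self (by linarith)]
  have hπ : (r * cos π - 1) / (r - cos π) = -1 := by
    rw [cos_pi, div_eq_iff (by linarith)]
    ring
  rw [intervalIntegral.integral_eq_sub_of_hasDerivAt_of_le pi_pos.le
    (f := fun θ => -arccos ((r * cos θ - 1) / (r - cos θ)) / √(r ^ 2 - 1))
    ((continuous_arccos.comp hu).neg.div_const _).continuousOn
    (fun θ hθ => ((hasDerivAt_arccos_div_sub_cos hr hθ).neg.div_const _).congr_deriv ?_)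
    (Continuous.intervalIntegrable
      (by fun_prop (disch := exact fun θ => (sub_neg.2 (hden θ)).ne)) _ _)]
  · simp only [h0, hπ, arccos_one, arccos_neg_one]
    ring
  · have hsD : 0 < √(r ^ 2 - 1) := sqrt_pos.2 (by nlinarith)
    rw [← neg_sub r (cos θ), inv_neg]
    field_simp [(sub_pos.2 (hden θ)).ne']

lemma integral_inv_cos_sub (hr : 1 < |r|) :
    ∫ θ in 0..π, (cos θ - r)⁻¹ = -(|r| / r) * π / √(r ^ 2 - 1) := by
  rcases lt_or_gt_of_ne (show r ≠ 0 by rintro rfl; norm_num at hr) with hneg | hpos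
  · have hr' : 1 < -r := by rwa [abs_of_neg hneg] at hr
    have hreflect := intervalIntegral.integral_comp_sub_left (fun θ => (cos θ - r)⁻¹) π
      (a := 0) (b := π)
    simp only [sub_zero, sub_self, cos_pi_sub] at hreflect
    have hflip : ∀ θ, (-cos θ - r)⁻¹ = -(cos θ - -r)⁻¹ := fun θ => by
      rw [← inv_neg]
      congr 1
      ring
    simp only [hflip, intervalIntegral.integral_neg] at hreflect
    rw [← hreflect, integral_inv_cos_sub_of_one_lt hr', abs_of_neg hneg, neg_sq, neg_div r r,
      div_self hneg.ne]
    ring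
  · rw [integral_inv_cos_sub_of_one_lt (by rwa [abs_of_pos hpos] at hr), abs_of_pos hpos,
      div_self hpos.ne']
    ring

lemma cos_sub_ne_zero_of_one_lt_abs (hr : 1 < |r|) (θ : ℝ) : cos θ - r ≠ 0 := by
  intro h
  have := abs_cos_le_one θ
  rw [sub_eq_zero.1 h] at this
  linarith

lemma intervalIntegrable_trigCauchy (hr : 1 < |r|) (k m : ℕ) :
    IntervalIntegrable (fun θ => cos (k * θ) * sin θ ^ (2 * m) / (cos θ - r)) volume 0 π :=
  (Continuous.div (by fun_prop) (by fun_prop) (cos_sub_ne_zero_of_one_lt_abs hr)).intervalIntegrable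
    _ _

lemma trigCauchy_add_two (hr : 1 < |r|) {m n : ℕ} (h : 2 * m ≤ n) :
    trigCauchy r m (n + 2) = 2 * r * trigCauchy r m (n + 1) - trigCauchy r m n := by
  -- `cos ((n+2)θ) + cos (nθ) = 2 cos θ cos ((n+1)θ)` and `cos θ = (cos θ - r) + r`
  have hsplit : ∀ θ : ℝ, cos ((n + 2 : ℕ) * θ) * sin θ ^ (2 * m) / (cos θ - r) =
      2 * (cos ((n + 1 : ℕ) * θ) * sin θ ^ (2 * m))
        + 2 * r * (cos ((n + 1 : ℕ) * θ) * sin θ ^ (2 * m) / (cos θ - r))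
        - cos (n * θ) * sin θ ^ (2 * m) / (cos θ - r) := fun θ => by
    have h2 : ((n + 2 : ℕ) : ℝ) * θ = (n + 1 : ℕ) * θ + θ := by push_cast; ring
    have h0 : (n : ℝ) * θ = (n + 1 : ℕ) * θ - θ := by push_cast; ring
    rw [h2, h0, cos_add, cos_sub]
    field_simp [cos_sub_ne_zero_of_one_lt_abs hr θ]
    ring
  have hJ := intervalIntegrable_trigCauchy hr
  have hA := intervalIntegrable_cos_nat_mul_mul_sin_pow (n + 1) m
  rw [trigCauchy, intervalIntegral.integral_congr fun θ _ => hsplit θ,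
    intervalIntegral.integral_sub ((hA.const_mul _).add ((hJ _ m).const_mul _)) (hJ _ m),
    intervalIntegral.integral_add (hA.const_mul _) ((hJ _ m).const_mul _),
    intervalIntegral.integral_const_mul, intervalIntegral.integral_const_mul,
    integral_cos_nat_mul_mul_sin_pow_eq_zero (by omega)]
  simp [trigCauchy]

lemma trigCauchy_succ_left (hr : 1 < |r|) {m n : ℕ} (h : 2 * (m + 1) ≤ n) :
    trigCauchy r (m + 1) n = (1 - r ^ 2) * trigCauchy r m n := by
  obtain ⟨l, rfl⟩ : ∃ l, n = l + 1 := ⟨n - 1, by omega⟩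
  -- `sin² θ = (1 - r²) - (cos θ - r)(cos θ + r)`, and `cos ((l+1)θ) (cos θ + r)` has no
  -- frequency above `l + 2`
  have hsplit : ∀ θ : ℝ, cos ((l + 1 : ℕ) * θ) * sin θ ^ (2 * (m + 1)) / (cos θ - r) =
      (1 - r ^ 2) * (cos ((l + 1 : ℕ) * θ) * sin θ ^ (2 * m) / (cos θ - r))
        - 1 / 2 * (cos ((l + 2 : ℕ) * θ) * sin θ ^ (2 * m))
        - 1 / 2 * (cos (l * θ) * sin θ ^ (2 * m))
        - r * (cos ((l + 1 : ℕ) * θ) * sin θ ^ (2 * m)) := fun θ => by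
    have h2 : ((l + 2 : ℕ) : ℝ) * θ = (l + 1 : ℕ) * θ + θ := by push_cast; ring
    have h0 : (l : ℝ) * θ = (l + 1 : ℕ) * θ - θ := by push_cast; ring
    rw [h2, h0, cos_add, cos_sub]
    field_simp [cos_sub_ne_zero_of_one_lt_abs hr θ]
    linear_combination 2 * cos (((l + 1 : ℕ) : ℝ) * θ) * sin θ ^ (2 * m) * sin_sq θ
  have hJ := intervalIntegrable_trigCauchy hr (l + 1) m
  have hA := intervalIntegrable_cos_nat_mul_mul_sin_pow
  rw [trigCauchy, intervalIntegral.integral_congr fun θ _ => hsplit θ,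
    intervalIntegral.integral_sub
      (((hJ.const_mul _).sub ((hA _ m).const_mul _)).sub ((hA _ m).const_mul _))
      ((hA _ m).const_mul _),
    intervalIntegral.integral_sub ((hJ.const_mul _).sub ((hA _ m).const_mul _))
      ((hA _ m).const_mul _),
    intervalIntegral.integral_sub (hJ.const_mul _) ((hA _ m).const_mul _)]
  simp only [intervalIntegral.integral_const_mul,
    integral_cos_nat_mul_mul_sin_pow_eq_zero (by omega : 2 * m < l + 2),
    integral_cos_nat_mul_mul_sin_pow_eq_zero (by omega : 2 * m < l),
    integral_cos_nat_mul_mul_sin_pow_eq_zero (by omega : 2 * m < l + 1)]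
  simp [trigCauchy]

lemma trigCauchy_zero_one (hr : 1 < |r|) : trigCauchy r 0 1 = π + r * trigCauchy r 0 0 := by
  have hsplit : ∀ θ, cos ((1 : ℕ) * θ) * sin θ ^ (2 * 0) / (cos θ - r) =
      1 + r * (cos ((0 : ℕ) * θ) * sin θ ^ (2 * 0) / (cos θ - r)) := fun θ => by
    simp only [Nat.cast_one, one_mul, CharP.cast_eq_zero, zero_mul, cos_zero]
    field_simp [cos_sub_ne_zero_of_one_lt_abs hr θ]
    ring
  rw [trigCauchy, intervalIntegral.integral_congr fun θ _ => hsplit θ,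
    intervalIntegral.integral_add intervalIntegrable_const
      ((intervalIntegrable_trigCauchy hr 0 0).const_mul r),
    intervalIntegral.integral_const_mul]
  simp [trigCauchy]

lemma trigCauchy_zero_left (hr : 1 < |r|) (n : ℕ) :
    trigCauchy r 0 n = -(|r| / r) * π / √(r ^ 2 - 1) * (r - |r| / r * √(r ^ 2 - 1)) ^ n := by
  have hσ : (|r| / r) ^ 2 = 1 := by
    rw [div_pow, sq_abs, div_self (pow_ne_zero 2 (by rintro rfl; norm_num at hr))]
  have hD : √(r ^ 2 - 1) ^ 2 = r ^ 2 - 1 := sq_sqrt (by nlinarith [sq_abs r])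
  have hsD : √(r ^ 2 - 1) ≠ 0 := (sqrt_pos.2 (by nlinarith [sq_abs r])).ne'
  have h0 : trigCauchy r 0 0 = -(|r| / r) * π / √(r ^ 2 - 1) := by
    simp only [trigCauchy, CharP.cast_eq_zero, zero_mul, cos_zero, mul_zero, pow_zero, one_mul,
      one_div, integral_inv_cos_sub hr]
  generalize |r| / r = σ at hσ h0 ⊢
  refine eq_mul_pow_of_two_step (a := 2 * r) (b := -1) ?_
    (fun n => by rw [trigCauchy_add_two hr (by omega)]; ring) h0 ?_ n
  · linear_combination √(r ^ 2 - 1) ^ 2 * hσ + hD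
  · rw [trigCauchy_zero_one hr, h0]
    field_simp
    linear_combination -√(r ^ 2 - 1) * hσ

lemma trigCauchy_eq (hr : 1 < |r|) {m n : ℕ} (h : 2 * m ≤ n) :
    trigCauchy r m n = π * (-1 : ℝ) ^ (m + 1) * (|r| / r) * (r ^ 2 - 1) ^ ((m : ℝ) - 1 / 2) *
      (r - |r| / r * √(r ^ 2 - 1)) ^ n := by
  have hD : 0 < r ^ 2 - 1 := by nlinarith [sq_abs r]
  induction m with
  | zero =>
    rw [trigCauchy_zero_left hr, Nat.cast_zero, zero_sub, rpow_neg hD.le, ← sqrt_eq_rpow]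
    ring
  | succ m ih =>
    rw [trigCauchy_succ_left hr h, ih (by omega), Nat.cast_succ, add_sub_right_comm,
      rpow_add_one hD.ne']
    ring

end trigCauchy

/-- For integers `m ≥ 0`, `n ≥ 2m` and real `r` with `|r| > 1`,
`∫_{-1}^{1} T_n(s)(1-s²)^{m-1/2}/(s-r) ds
  = π (-1)^{m+1} (|r|/r) (r²-1)^{m-1/2} (r - (|r|/r)√(r²-1))^n`. -/
theorem S1_T_general (m n : ℕ) (hn : 2 * m ≤ n) (r : ℝ) (hr : 1 < |r|) :
    ∫ s in (-1 : ℝ)..1,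
        (Polynomial.Chebyshev.T ℝ n).eval s * (1 - s ^ 2) ^ ((m : ℝ) - 1 / 2) / (s - r) =
      Real.pi * (-1 : ℝ) ^ (m + 1) * (|r| / r) * (r ^ 2 - 1) ^ ((m : ℝ) - 1 / 2) *
        (r - |r| / r * Real.sqrt (r ^ 2 - 1)) ^ n := by
  rw [integral_chebyshevT_mul_rpow_div_sub_eq_trigCauchy, trigCauchy_eq hr hn]
end

section
/- Let m ≥ 1 and n ≥ 2m − 2 be integers and let r ∈ ℝ with |r| > 1. Then the (ordinary Lebesgue) integral ∫_{−1}^{1} U_n(s)·(1−s²)^{m−1/2}/(s−r) ds equals π·(−1)^m·(r²−1)^{m−1}·( r − sgn(r)·√(r²−1) )^{n+1}, where sgn(r) = |r|/r denotes the sign of r. (In particular, for m = 1 this gives ∫_{−1}^{1} U_n(s)·√(1−s²)/(s−r) ds = −π·( r − sgn(r)·√(r²−1) )^{n+1} for all n ≥ 0.) -/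
/-!
Write `I_a(n) = ∫_{-1}^{1} U_n(s) (1 - s²)^a / (s - r) ds` and let `ρ = r - sgn(r) √(r² - 1)`,
the root of `x² - 2 r x + 1` inside the unit disc.

For `a = 1/2`, the recurrence `U_{n+2} = 2 s U_{n+1} - U_n`, the splitting
`s / (s - r) = 1 + r / (s - r)` and the orthogonality `∫ U_k(s) √(1 - s²) ds = 0` (`k ≥ 1`) give
`I(n+2) = 2 r I(n+1) - I(n)`. The substitution `s = sin φ` gives `I(0) = -π ρ`, and then
`I(1) = -π ρ²`, so `I(n) = -π ρ^(n+1)`.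

Raising the exponent by one uses `4 (1 - s²) U_{n+2} = 2 U_{n+2} - U_{n+4} - U_n`, so
`I_{a+1}(n+2) = (2 I_a(n+2) - I_a(n+4) - I_a(n)) / 4`. For `I_a(n) = C ρ^(n+1)` this is
`C ρ^(n+3) (2 - ρ² - ρ⁻²) / 4 = (1 - r²) C ρ^(n+3)`, since `ρ + ρ⁻¹ = 2 r`; this produces the
factor `(-1)^m (r² - 1)^(m-1)`. The condition `n ≥ 2m - 2` keeps every index that occurs
nonnegative, where the geometric formula holds.
-/

open Real intervalIntegral Set Polynomial Polynomial.Chebyshev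

namespace Polynomial.Chebyshev

variable (R : Type*) [CommRing R]

theorem two_mul_one_sub_X_sq_mul_U (n : ℤ) :
    2 * (1 - X ^ 2) * U R n = T R n - T R (n + 2) := by
  have h := T_mul_T R (n + 1) 1
  rw [T_one, add_sub_cancel_right, add_assoc, one_add_one_eq_two] at h
  linear_combination 2 * one_sub_X_sq_mul_U_eq_pol_in_T R n + h

theorem four_mul_one_sub_X_sq_mul_U (n : ℤ) :
    4 * (1 - X ^ 2) * U R (n + 2) = 2 * U R (n + 2) - U R (n + 4) - U R n := by
  have h := two_mul_one_sub_X_sq_mul_U R (n + 2)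
  have h₂ := two_mul_T_eq_U_sub_U R n
  have h₄ := two_mul_T_eq_U_sub_U R (n + 2)
  rw [add_assoc, show (2 : ℤ) + 2 = 4 by norm_num] at h h₄
  linear_combination 2 * h + h₂ - h₄

theorem integral_eval_U_mul_sqrt_one_sub_sq {n : ℤ} (hn : n ≠ 0) (hn₂ : n + 2 ≠ 0) :
    ∫ x in -1..1, (U ℝ n).eval x * √(1 - x ^ 2) = 0 := by
  have h (x : ℝ) : (U ℝ n).eval x * √(1 - x ^ 2) =
      ((T ℝ n).eval x - (T ℝ (n + 2)).eval x) / 2 * √(1 - x ^ 2)⁻¹ := by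
    have := congrArg (eval x) (two_mul_one_sub_X_sq_mul_U ℝ n)
    simp only [eval_mul, eval_sub, eval_pow, eval_X, eval_one, eval_ofNat] at this
    rw [← this, Real.sqrt_inv]
    nth_rewrite 1 [← Real.div_sqrt]
    ring
  simp_rw [h, ← integral_measureT]
  rw [MeasureTheory.integral_div, MeasureTheory.integral_sub (integrable_measureT (by fun_prop))
    (integrable_measureT (by fun_prop)), integral_eval_T_real_measureT_of_ne_zero hn,
    integral_eval_T_real_measureT_of_ne_zero hn₂]
  simp

end Polynomial.Chebyshev

theorem eq_mul_pow_of_add_two_eq {R : Type*} [CommRing R] {x : ℕ → R} {p q c ρ : R}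
    (hρ : ρ ^ 2 = p * ρ - q) (h₀ : x 0 = c) (h₁ : x 1 = c * ρ)
    (hx : ∀ n, x (n + 2) = p * x (n + 1) - q * x n) (n : ℕ) : x n = c * ρ ^ n := by
  induction n using Nat.twoStepInduction with
  | zero => simp [h₀]
  | one => simp [h₁]
  | more n ih ih' =>
    rw [hx, ih, ih']
    linear_combination -(c * ρ ^ n) * hρ

/-- The root of `x ^ 2 - 2 * r * x + 1` of modulus less than one when `1 < |r|`. -/
noncomputable def smallRoot (r : ℝ) : ℝ := r - |r| / r * √(r ^ 2 - 1)

theorem smallRoot_sq {r : ℝ} (hr : 1 ≤ r ^ 2) : smallRoot r ^ 2 = 2 * r * smallRoot r - 1 := by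
  have hr₀ : r ≠ 0 := by rintro rfl; norm_num at hr
  have hsign : (|r| / r) ^ 2 = 1 := by rw [div_pow, sq_abs, div_self (pow_ne_zero 2 hr₀)]
  have hsqrt : √(r ^ 2 - 1) ^ 2 = r ^ 2 - 1 := Real.sq_sqrt (by linarith)
  unfold smallRoot
  linear_combination √(r ^ 2 - 1) ^ 2 * hsign + hsqrt

theorem integral_comp_sin_mul_cos {f : ℝ → ℝ} (hf : ContinuousOn f (Icc (-1) 1)) :
    ∫ s in (-1 : ℝ)..1, f s = ∫ φ in -(π / 2)..π / 2, f (sin φ) * cos φ := by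
  have hsin : sin '' uIcc (-(π / 2)) (π / 2) ⊆ Icc (-1) 1 := by
    rintro _ ⟨φ, -, rfl⟩
    exact ⟨neg_one_le_sin φ, sin_le_one φ⟩
  simpa using (integral_comp_mul_deriv' (fun φ _ => hasDerivAt_sin φ) continuousOn_cos
    (hf.mono hsin)).symm

theorem sub_ne_zero_of_mem_Icc_of_one_lt_abs {r s : ℝ} (hr : 1 < |r|) (hs : s ∈ Icc (-1) 1) :
    s - r ≠ 0 := by
  rw [sub_ne_zero]
  rintro rfl
  exact (abs_le.2 hs).not_gt hr

theorem sin_sub_ne_zero {r : ℝ} (hr : 1 < |r|) (φ : ℝ) : sin φ - r ≠ 0 :=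
  sub_ne_zero_of_mem_Icc_of_one_lt_abs hr ⟨neg_one_le_sin φ, sin_le_one φ⟩

theorem continuousOn_div_sub {r : ℝ} (hr : 1 < |r|) {g : ℝ → ℝ}
    (hg : ContinuousOn g (Icc (-1) 1)) : ContinuousOn (fun s => g s / (s - r)) (Icc (-1) 1) :=
  hg.div (by fun_prop) fun _ hs => sub_ne_zero_of_mem_Icc_of_one_lt_abs hr hs

theorem intervalIntegrable_div_sub {r : ℝ} (hr : 1 < |r|) {g : ℝ → ℝ}
    (hg : ContinuousOn g (Icc (-1) 1)) :
    IntervalIntegrable (fun s => g s / (s - r)) MeasureTheory.volume (-1) 1 :=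
  (continuousOn_div_sub hr hg).intervalIntegrable_of_Icc (by norm_num)

/-- The primitive given by the Weierstrass substitution `t = tan (φ / 2)`. -/
theorem hasDerivAt_arctan_tan_half {r w φ : ℝ} (hw : w ^ 2 = r ^ 2 - 1) (hw₀ : w ≠ 0)
    (hne : sin φ - r ≠ 0) (hφ : cos (φ / 2) ≠ 0) :
    HasDerivAt (fun φ => 2 / w * arctan ((1 - r * tan (φ / 2)) / w)) (sin φ - r)⁻¹ φ := by
  have htan : HasDerivAt (fun φ => tan (φ / 2)) (1 / cos (φ / 2) ^ 2 * (1 / 2)) φ := by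
    exact (hasDerivAt_tan hφ).comp φ ((hasDerivAt_id' φ).div_const 2)
  refine ((((htan.const_mul r).const_sub 1).div_const w).arctan.const_mul (2 / w)).congr_deriv ?_
  have hsin : sin φ = 2 * sin (φ / 2) * cos (φ / 2) := by
    rw [← sin_two_mul]; ring_nf
  rw [hsin] at hne ⊢
  rw [tan_eq_sin_div_cos]
  field_simp
  linear_combination (-(r ^ 2)) * sin_sq_add_cos_sq (φ / 2) - cos (φ / 2) ^ 2 * hw

theorem integral_inv_sin_sub {r : ℝ} (hr : 1 < |r|) :
    ∫ φ in -(π / 2)..π / 2, (sin φ - r)⁻¹ = -(|r| / r) * π / √(r ^ 2 - 1) := by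
  have hr₀ : r ≠ 0 := by rintro rfl; norm_num at hr
  have hr₂ : 1 < r ^ 2 := by rwa [← one_lt_sq_iff_one_lt_abs] at hr
  set w := √(r ^ 2 - 1)
  have hw₀ : 0 < w := Real.sqrt_pos.2 (by linarith)
  have hw : w ^ 2 = r ^ 2 - 1 := Real.sq_sqrt (by linarith)
  have hπ : -(π / 2) ≤ π / 2 := by linarith [pi_pos]
  have hderiv : ∀ φ ∈ uIcc (-(π / 2)) (π / 2), HasDerivAt
      (fun φ => 2 / w * arctan ((1 - r * tan (φ / 2)) / w)) (sin φ - r)⁻¹ φ := by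
    intro φ hφ
    rw [uIcc_of_le hπ] at hφ
    refine hasDerivAt_arctan_tan_half hw hw₀.ne' (sin_sub_ne_zero hr φ) (cos_pos_of_mem_Ioo ⟨?_, ?_⟩).ne'
    all_goals linarith [hφ.1, hφ.2, pi_pos]
  have hint : IntervalIntegrable (fun φ => (sin φ - r)⁻¹) MeasureTheory.volume (-(π / 2)) (π / 2) :=
    ((continuous_sin.sub continuous_const).inv₀ (sin_sub_ne_zero hr)).intervalIntegrable _ _
  rw [integral_eq_sub_of_hasDerivAt hderiv hint, neg_div, tan_neg,
    show π / 2 / 2 = π / 4 by ring, tan_pi_div_four, mul_neg, mul_one, sub_neg_eq_add]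
  have hinv : ((1 - r) / w)⁻¹ = -((1 + r) / w) := by
    have : 1 - r ≠ 0 := fun h => by nlinarith
    field_simp
    linear_combination hw
  rcases lt_abs.1 hr with hr₁ | hr₁
  · have := arctan_inv_of_neg (div_neg_of_neg_of_pos (by linarith : 1 - r < 0) hw₀)
    rw [hinv, arctan_neg] at this
    rw [abs_of_pos (by linarith : 0 < r), div_self hr₀]
    field_simp
    linear_combination 2 * this
  · have := arctan_inv_of_pos (div_pos (by linarith : 0 < 1 - r) hw₀)
    rw [hinv, arctan_neg] at this
    rw [abs_of_neg (by linarith : r < 0), neg_div_self hr₀]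
    field_simp
    linear_combination 2 * this

theorem integral_sqrt_one_sub_sq_div_sub {r : ℝ} (hr : 1 < |r|) :
    ∫ s in (-1 : ℝ)..1, √(1 - s ^ 2) / (s - r) = -π * smallRoot r := by
  have hr₀ : r ≠ 0 := by rintro rfl; norm_num at hr
  have hr₂ : 0 < r ^ 2 - 1 := by linarith [one_lt_sq_iff_one_lt_abs r |>.2 hr]
  have hw₀ : √(r ^ 2 - 1) ≠ 0 := (Real.sqrt_pos.2 hr₂).ne'
  have hw : √(r ^ 2 - 1) ^ 2 = r ^ 2 - 1 := Real.sq_sqrt hr₂.le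
  have hπ : -(π / 2) ≤ π / 2 := by linarith [pi_pos]
  have hsplit : ∀ φ ∈ uIcc (-(π / 2)) (π / 2),
      √(1 - sin φ ^ 2) / (sin φ - r) * cos φ = -sin φ - r + (1 - r ^ 2) * (sin φ - r)⁻¹ := by
    intro φ hφ
    rw [uIcc_of_le hπ] at hφ
    have hne := sin_sub_ne_zero hr φ
    rw [← cos_sq', Real.sqrt_sq (cos_nonneg_of_mem_Icc hφ)]
    field_simp
    linear_combination sin_sq_add_cos_sq φ
  have hpoly : ∫ φ in -(π / 2)..π / 2, (-sin φ - r) = -(r * π) := by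
    rw [integral_sub (f := fun φ => -sin φ) (continuous_sin.intervalIntegrable _ _).neg
      intervalIntegrable_const, integral_neg, integral_sin]
    simp
    ring
  have hinv : IntervalIntegrable (fun φ => (1 - r ^ 2) * (sin φ - r)⁻¹) MeasureTheory.volume
      (-(π / 2)) (π / 2) :=
    (continuous_const.mul ((continuous_sin.sub continuous_const).inv₀
      (sin_sub_ne_zero hr))).intervalIntegrable _ _
  rw [integral_comp_sin_mul_cos (continuousOn_div_sub hr (by fun_prop)), integral_congr hsplit,
    integral_add ((by fun_prop : Continuous fun φ => -sin φ - r).intervalIntegrable _ _) hinv,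
    integral_const_mul, hpoly, integral_inv_sin_sub hr, smallRoot]
  field_simp
  linear_combination (-|r|) * hw

noncomputable def cauchyTransformU (a r : ℝ) (n : ℤ) : ℝ :=
  ∫ s in (-1 : ℝ)..1, (U ℝ n).eval s * (1 - s ^ 2) ^ a / (s - r)

section CauchyTransformU

variable {a r : ℝ}

theorem continuous_eval_U_mul_one_sub_sq_rpow (ha : 0 ≤ a) (n : ℤ) :
    Continuous fun s : ℝ => (U ℝ n).eval s * (1 - s ^ 2) ^ a :=
  (U ℝ n).continuous.mul ((Real.continuous_rpow_const ha).comp (by fun_prop))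

theorem intervalIntegrable_cauchyTransformU (ha : 0 ≤ a) (hr : 1 < |r|) (n : ℤ) :
    IntervalIntegrable (fun s => (U ℝ n).eval s * (1 - s ^ 2) ^ a / (s - r))
      MeasureTheory.volume (-1) 1 :=
  intervalIntegrable_div_sub hr (continuous_eval_U_mul_one_sub_sq_rpow ha n).continuousOn

theorem cauchyTransformU_add_two (ha : 0 ≤ a) (hr : 1 < |r|) (n : ℤ) :
    cauchyTransformU a r (n + 2) =
      2 * (∫ s in (-1 : ℝ)..1, (U ℝ (n + 1)).eval s * (1 - s ^ 2) ^ a)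
        + 2 * r * cauchyTransformU a r (n + 1) - cauchyTransformU a r n := by
  have hsplit : ∀ s ∈ uIcc (-1 : ℝ) 1,
      (U ℝ (n + 2)).eval s * (1 - s ^ 2) ^ a / (s - r) =
        2 * ((U ℝ (n + 1)).eval s * (1 - s ^ 2) ^ a)
          + 2 * r * ((U ℝ (n + 1)).eval s * (1 - s ^ 2) ^ a / (s - r))
          - (U ℝ n).eval s * (1 - s ^ 2) ^ a / (s - r) := by
    intro s hs
    rw [uIcc_of_le (by norm_num)] at hs
    have hne := sub_ne_zero_of_mem_Icc_of_one_lt_abs hr hs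
    simp only [U_add_two, eval_sub, eval_mul, eval_ofNat, eval_X]
    field_simp
    ring
  have hcont := (continuous_eval_U_mul_one_sub_sq_rpow ha (n + 1)).intervalIntegrable
    (μ := MeasureTheory.volume) (-1) 1
  unfold cauchyTransformU
  rw [integral_congr hsplit, integral_sub ((hcont.const_mul 2).add
    ((intervalIntegrable_cauchyTransformU ha hr _).const_mul _))
    (intervalIntegrable_cauchyTransformU ha hr _), integral_add (hcont.const_mul 2)
    ((intervalIntegrable_cauchyTransformU ha hr _).const_mul _), integral_const_mul,
    integral_const_mul]

theorem cauchyTransformU_add_one (ha : 0 ≤ a) (hr : 1 < |r|) (n : ℤ) :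
    cauchyTransformU (a + 1) r (n + 2) = (2 * cauchyTransformU a r (n + 2)
      - cauchyTransformU a r (n + 4) - cauchyTransformU a r n) / 4 := by
  have hsplit : ∀ s ∈ uIcc (-1 : ℝ) 1,
      (U ℝ (n + 2)).eval s * (1 - s ^ 2) ^ (a + 1) / (s - r) =
        (2 * ((U ℝ (n + 2)).eval s * (1 - s ^ 2) ^ a / (s - r))
          - (U ℝ (n + 4)).eval s * (1 - s ^ 2) ^ a / (s - r)
          - (U ℝ n).eval s * (1 - s ^ 2) ^ a / (s - r)) / 4 := by
    intro s hs
    rw [uIcc_of_le (by norm_num)] at hs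
    have hne := sub_ne_zero_of_mem_Icc_of_one_lt_abs hr hs
    have hpow : (1 - s ^ 2) ^ (a + 1) = (1 - s ^ 2) ^ a * (1 - s ^ 2) := by
      rw [Real.rpow_add' (by nlinarith [hs.1, hs.2]) (by positivity), Real.rpow_one]
    have hU := congrArg (eval s) (four_mul_one_sub_X_sq_mul_U ℝ n)
    simp only [eval_sub, eval_mul, eval_ofNat, eval_pow, eval_X, eval_one] at hU
    rw [hpow]
    field_simp
    linear_combination (1 - s ^ 2) ^ a * hU
  have hint := intervalIntegrable_cauchyTransformU ha hr
  unfold cauchyTransformU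
  rw [integral_congr hsplit, intervalIntegral.integral_div, integral_sub
    (((hint _).const_mul 2).sub (hint _)) (hint _), integral_sub ((hint _).const_mul 2) (hint _),
    integral_const_mul]

end CauchyTransformU

theorem cauchyTransformU_half {r : ℝ} (hr : 1 < |r|) (n : ℕ) :
    cauchyTransformU (1 / 2) r n = -π * smallRoot r ^ (n + 1) := by
  have ha : (0 : ℝ) ≤ 1 / 2 := by norm_num
  have hρ := smallRoot_sq (one_lt_sq_iff_one_lt_abs r |>.2 hr).le
  have hsqrt (n : ℤ) : ∫ s in (-1 : ℝ)..1, (U ℝ n).eval s * (1 - s ^ 2) ^ (1 / 2 : ℝ) =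
      ∫ s in (-1 : ℝ)..1, (U ℝ n).eval s * √(1 - s ^ 2) := by
    simp only [Real.sqrt_eq_rpow]
  have h₀ : cauchyTransformU (1 / 2) r 0 = -π * smallRoot r := by
    simp only [cauchyTransformU, ← Real.sqrt_eq_rpow, U_zero, eval_one, one_mul]
    exact integral_sqrt_one_sub_sq_div_sub hr
  have h₁ : cauchyTransformU (1 / 2) r 1 = -π * smallRoot r * smallRoot r := by
    have h := cauchyTransformU_add_two ha hr (-1)
    have hneg : cauchyTransformU (1 / 2) r (-1) = 0 := by simp [cauchyTransformU]
    rw [show (-1 : ℤ) + 2 = 1 by norm_num, show (-1 : ℤ) + 1 = 0 by norm_num, hsqrt, hneg,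
      h₀] at h
    simp only [U_zero, eval_one, one_mul, integral_sqrt_one_sub_sq] at h
    rw [h]
    linear_combination π * hρ
  have hrec (n : ℕ) : cauchyTransformU (1 / 2) r ↑(n + 2) =
      2 * r * cauchyTransformU (1 / 2) r ↑(n + 1) - 1 * cauchyTransformU (1 / 2) r n := by
    have h := cauchyTransformU_add_two ha hr n
    rw [hsqrt, integral_eval_U_mul_sqrt_one_sub_sq (by omega) (by omega)] at h
    push_cast
    linear_combination h
  rw [eq_mul_pow_of_add_two_eq (x := fun n : ℕ => cauchyTransformU (1 / 2) r n) hρ h₀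
    (by exact_mod_cast h₁) hrec n]
  ring

theorem cauchyTransformU_nat_add_half {r : ℝ} (hr : 1 < |r|) (j n : ℕ) (hn : 2 * j ≤ n) :
    cauchyTransformU (j + 1 / 2) r n = -π * (1 - r ^ 2) ^ j * smallRoot r ^ (n + 1) := by
  induction j generalizing n with
  | zero => simpa using cauchyTransformU_half hr n
  | succ j ih =>
    obtain ⟨k, rfl⟩ : ∃ k, n = k + 2 := ⟨n - 2, by omega⟩
    have h := cauchyTransformU_add_one (a := j + 1 / 2) (by positivity) hr k
    have h₀ := ih k (by omega)
    have h₂ := ih (k + 2) (by omega)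
    have h₄ := ih (k + 4) (by omega)
    push_cast at h₀ h₂ h₄ ⊢
    rw [show (j : ℝ) + 1 + 1 / 2 = j + 1 / 2 + 1 by ring, h, h₀, h₂, h₄]
    linear_combination (π * (1 - r ^ 2) ^ j * smallRoot r ^ (k + 1) / 4
      * (smallRoot r ^ 2 + 1 + 2 * r * smallRoot r))
      * smallRoot_sq (one_lt_sq_iff_one_lt_abs r |>.2 hr).le

/-- For integers `m ≥ 1`, `n ≥ 2m - 2` and real `r` with `|r| > 1`,
`∫_{-1}^{1} U_n(s)(1-s²)^{m-1/2}/(s-r) ds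
  = π (-1)^m (r²-1)^{m-1} (r - (|r|/r)√(r²-1))^{n+1}`. -/
theorem S1_U_general (m n : ℕ) (hm : 1 ≤ m) (hn : 2 * m - 2 ≤ n) (r : ℝ) (hr : 1 < |r|) :
    ∫ s in (-1 : ℝ)..1,
        (Polynomial.Chebyshev.U ℝ n).eval s * (1 - s ^ 2) ^ ((m : ℝ) - 1 / 2) / (s - r) =
      Real.pi * (-1 : ℝ) ^ m * (r ^ 2 - 1) ^ (m - 1) *
        (r - |r| / r * Real.sqrt (r ^ 2 - 1)) ^ (n + 1) := by
  obtain ⟨j, rfl⟩ : ∃ j, m = j + 1 := ⟨m - 1, by omega⟩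
  have h := cauchyTransformU_nat_add_half hr j n (by omega)
  rw [cauchyTransformU, show (j : ℝ) + 1 / 2 = ((j + 1 : ℕ) : ℝ) - 1 / 2 by push_cast; ring] at h
  rw [h, smallRoot, ← neg_sub, neg_pow, Nat.add_sub_cancel, pow_succ]
  ring
end
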